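/- Let H be a bialgebra. The category LR(H), with objects H-bimodules H-bicomodules satisfying the left-left Yetter-Drinfeld, left-right Long, right-right Yetter-Drinfeld, and right-left Long conditions, morphisms the H-bilinear H-bicolinear maps, tensor product given by diagonal actions and codiagonal coactions, and unit object k with trivial structures, is a monoidal category; in particular, the tensor product of two morphisms of LR(H) is again a morphism of LR(H). -/
import Mathlib

open TensorProduct
noncomputable section
namespace LRPaper
variable (k : Type*) [CommRing k]

def tt (A B C E : Type*) [AddCommGroup A] [Module k A] [AddCommGroup B] [Module k B]
    [AddCommGroup C] [Module k C] [AddCommGroup E] [Module k E] :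
    (A ⊗[k] B) ⊗[k] (C ⊗[k] E) →ₗ[k] (A ⊗[k] C) ⊗[k] (B ⊗[k] E) :=
  (TensorProduct.tensorTensorTensorComm k A B C E).toLinearMap

def asl (A B C : Type*) [AddCommGroup A] [Module k A] [AddCommGroup B] [Module k B]
    [AddCommGroup C] [Module k C] :
    (A ⊗[k] B) ⊗[k] C →ₗ[k] A ⊗[k] (B ⊗[k] C) :=
  (TensorProduct.assoc k A B C).toLinearMap

def asr (A B C : Type*) [AddCommGroup A] [Module k A] [AddCommGroup B] [Module k B]
    [AddCommGroup C] [Module k C] :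
    A ⊗[k] (B ⊗[k] C) →ₗ[k] (A ⊗[k] B) ⊗[k] C :=
  (TensorProduct.assoc k A B C).symm.toLinearMap

def sw (A B : Type*) [AddCommGroup A] [Module k A] [AddCommGroup B] [Module k B] :
    A ⊗[k] B →ₗ[k] B ⊗[k] A :=
  (TensorProduct.comm k A B).toLinearMap


/-- `middle f` applies `f` to the two middle tensor factors. -/
def middle {A B C E B' C' : Type*} [AddCommGroup A] [Module k A] [AddCommGroup B] [Module k B]
    [AddCommGroup C] [Module k C] [AddCommGroup E] [Module k E]
    [AddCommGroup B'] [Module k B'] [AddCommGroup C'] [Module k C']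
    (f : B ⊗[k] C →ₗ[k] B' ⊗[k] C') :
    (A ⊗[k] B) ⊗[k] (C ⊗[k] E) →ₗ[k] (A ⊗[k] B') ⊗[k] (C' ⊗[k] E) :=
  asl k (A ⊗[k] B') C' E
    ∘ₗ TensorProduct.map
        (asr k A B' C' ∘ₗ TensorProduct.map LinearMap.id f ∘ₗ asl k A B C) LinearMap.id
    ∘ₗ asr k (A ⊗[k] B) C E

section Conditions
variable (H : Type*) [Ring H] [Bialgebra k H]
variable {M N : Type*} [AddCommGroup M] [Module k M] [AddCommGroup N] [Module k N]

/-- counit of `H` -/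
def εH : H →ₗ[k] k := Coalgebra.counit
/-- comultiplication of `H` -/
def δH : H →ₗ[k] H ⊗[k] H := Coalgebra.comul
/-- multiplication of `H` -/
def μH : H ⊗[k] H →ₗ[k] H := LinearMap.mul' k H

def IsLeftModule (aL : H ⊗[k] M →ₗ[k] M) : Prop :=
  (∀ m : M, aL (1 ⊗ₜ m) = m) ∧
  ∀ (h h' : H) (m : M), aL ((h * h') ⊗ₜ m) = aL (h ⊗ₜ aL (h' ⊗ₜ m))

def IsRightModule (aR : M ⊗[k] H →ₗ[k] M) : Prop :=
  (∀ m : M, aR (m ⊗ₜ 1) = m) ∧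
  ∀ (m : M) (h h' : H), aR (m ⊗ₜ (h * h')) = aR (aR (m ⊗ₜ h) ⊗ₜ h')

def IsBimodule (aL : H ⊗[k] M →ₗ[k] M) (aR : M ⊗[k] H →ₗ[k] M) : Prop :=
  IsLeftModule k H aL ∧ IsRightModule k H aR ∧
  ∀ (h : H) (m : M) (h' : H), aR (aL (h ⊗ₜ m) ⊗ₜ h') = aL (h ⊗ₜ aR (m ⊗ₜ h'))

def IsLeftComodule (cL : M →ₗ[k] H ⊗[k] M) : Prop :=
  (∀ m : M, TensorProduct.lid k M (TensorProduct.map (εH k H) LinearMap.id (cL m)) = m) ∧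
  ∀ m : M, TensorProduct.map LinearMap.id cL (cL m)
    = TensorProduct.assoc k H H M (TensorProduct.map (δH k H) LinearMap.id (cL m))

def IsRightComodule (cR : M →ₗ[k] M ⊗[k] H) : Prop :=
  (∀ m : M, TensorProduct.rid k M (TensorProduct.map LinearMap.id (εH k H) (cR m)) = m) ∧
  ∀ m : M, TensorProduct.map cR LinearMap.id (cR m)
    = (TensorProduct.assoc k M H H).symm (TensorProduct.map LinearMap.id (δH k H) (cR m))

def IsBicomodule (cL : M →ₗ[k] H ⊗[k] M) (cR : M →ₗ[k] M ⊗[k] H) : Prop :=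
  IsLeftComodule k H cL ∧ IsRightComodule k H cR ∧
  ∀ m : M, TensorProduct.map LinearMap.id cR (cL m)
    = TensorProduct.assoc k H M H (TensorProduct.map cL LinearMap.id (cR m))

/-- `(h₁⊗h₂)⊗m ↦ (h₁·m)⁽⁻¹⁾h₂ ⊗ (h₁·m)⁽⁰⁾` -/
def ydlL (aL : H ⊗[k] M →ₗ[k] M) (cL : M →ₗ[k] H ⊗[k] M) :
    (H ⊗[k] H) ⊗[k] M →ₗ[k] H ⊗[k] M :=
  TensorProduct.map (μH k H ∘ₗ sw k H H) LinearMap.id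
    ∘ₗ asr k H H M
    ∘ₗ TensorProduct.map LinearMap.id (cL ∘ₗ aL)
    ∘ₗ asl k H H M
    ∘ₗ TensorProduct.map (sw k H H) LinearMap.id

/-- `(h₁⊗h₂)⊗m ↦ h₁m⁽⁻¹⁾ ⊗ h₂·m⁽⁰⁾` -/
def ydlR (aL : H ⊗[k] M →ₗ[k] M) (cL : M →ₗ[k] H ⊗[k] M) :
    (H ⊗[k] H) ⊗[k] M →ₗ[k] H ⊗[k] M :=
  TensorProduct.map (μH k H) aL ∘ₗ tt k H H H M ∘ₗ TensorProduct.map LinearMap.id cL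

/-- left-left Yetter–Drinfeld compatibility -/
def CondYDl (aL : H ⊗[k] M →ₗ[k] M) (cL : M →ₗ[k] H ⊗[k] M) : Prop :=
  ∀ (h : H) (m : M),
    ydlL k H aL cL (δH k H h ⊗ₜ m) = ydlR k H aL cL (δH k H h ⊗ₜ m)

/-- left-right Long compatibility -/
def CondLongLR (aL : H ⊗[k] M →ₗ[k] M) (cR : M →ₗ[k] M ⊗[k] H) : Prop :=
  ∀ (h : H) (m : M),
    cR (aL (h ⊗ₜ m))
      = TensorProduct.map aL LinearMap.id ((TensorProduct.assoc k H M H).symm (h ⊗ₜ cR m))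

/-- `m⊗(h₁⊗h₂) ↦ (m·h₂)⁽⁰⁾ ⊗ h₁(m·h₂)⁽¹⁾` -/
def ydrL (aR : M ⊗[k] H →ₗ[k] M) (cR : M →ₗ[k] M ⊗[k] H) :
    M ⊗[k] (H ⊗[k] H) →ₗ[k] M ⊗[k] H :=
  TensorProduct.map LinearMap.id (μH k H ∘ₗ sw k H H)
    ∘ₗ asl k M H H
    ∘ₗ TensorProduct.map (cR ∘ₗ aR) LinearMap.id
    ∘ₗ asr k M H H
    ∘ₗ TensorProduct.map LinearMap.id (sw k H H)

/-- `m⊗(h₁⊗h₂) ↦ m⁽⁰⁾·h₁ ⊗ m⁽¹⁾h₂` -/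
def ydrR (aR : M ⊗[k] H →ₗ[k] M) (cR : M →ₗ[k] M ⊗[k] H) :
    M ⊗[k] (H ⊗[k] H) →ₗ[k] M ⊗[k] H :=
  TensorProduct.map aR (μH k H) ∘ₗ tt k M H H H ∘ₗ TensorProduct.map cR LinearMap.id

/-- right-right Yetter–Drinfeld compatibility -/
def CondYDr (aR : M ⊗[k] H →ₗ[k] M) (cR : M →ₗ[k] M ⊗[k] H) : Prop :=
  ∀ (h : H) (m : M),
    ydrL k H aR cR (m ⊗ₜ δH k H h) = ydrR k H aR cR (m ⊗ₜ δH k H h)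

/-- right-left Long compatibility -/
def CondLongRL (aR : M ⊗[k] H →ₗ[k] M) (cL : M →ₗ[k] H ⊗[k] M) : Prop :=
  ∀ (m : M) (h : H),
    cL (aR (m ⊗ₜ h))
      = TensorProduct.map LinearMap.id aR (TensorProduct.assoc k H M H (cL m ⊗ₜ h))

/-- objects of the category LR(H) -/
def IsLRObj (aL : H ⊗[k] M →ₗ[k] M) (aR : M ⊗[k] H →ₗ[k] M)
    (cL : M →ₗ[k] H ⊗[k] M) (cR : M →ₗ[k] M ⊗[k] H) : Prop :=
  IsBimodule k H aL aR ∧ IsBicomodule k H cL cR ∧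
  CondYDl k H aL cL ∧ CondLongLR k H aL cR ∧ CondYDr k H aR cR ∧ CondLongRL k H aR cL


variable {P : Type*} [AddCommGroup P] [Module k P]

/-- diagonal left action on `M ⊗ N` -/
def tActL (aLM : H ⊗[k] M →ₗ[k] M) (aLN : H ⊗[k] N →ₗ[k] N) :
    H ⊗[k] (M ⊗[k] N) →ₗ[k] M ⊗[k] N :=
  TensorProduct.map aLM aLN ∘ₗ tt k H H M N ∘ₗ TensorProduct.map (δH k H) LinearMap.id

/-- diagonal right action on `M ⊗ N` -/
def tActR (aRM : M ⊗[k] H →ₗ[k] M) (aRN : N ⊗[k] H →ₗ[k] N) :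
    (M ⊗[k] N) ⊗[k] H →ₗ[k] M ⊗[k] N :=
  TensorProduct.map aRM aRN ∘ₗ tt k M N H H ∘ₗ TensorProduct.map LinearMap.id (δH k H)

/-- codiagonal left coaction on `M ⊗ N` -/
def tCoactL (cLM : M →ₗ[k] H ⊗[k] M) (cLN : N →ₗ[k] H ⊗[k] N) :
    M ⊗[k] N →ₗ[k] H ⊗[k] (M ⊗[k] N) :=
  TensorProduct.map (μH k H) LinearMap.id ∘ₗ tt k H M H N ∘ₗ TensorProduct.map cLM cLN

/-- codiagonal right coaction on `M ⊗ N` -/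
def tCoactR (cRM : M →ₗ[k] M ⊗[k] H) (cRN : N →ₗ[k] N ⊗[k] H) :
    M ⊗[k] N →ₗ[k] (M ⊗[k] N) ⊗[k] H :=
  TensorProduct.map LinearMap.id (μH k H) ∘ₗ tt k M H N H ∘ₗ TensorProduct.map cRM cRN

/-- the (pre)braiding `m ⊗ n ↦ m⁽⁻¹⁾·n⁽⁰⁾ ⊗ m⁽⁰⁾·n⁽¹⁾` of LR(H) -/
def braid (cLM : M →ₗ[k] H ⊗[k] M) (aRM : M ⊗[k] H →ₗ[k] M)
    (aLN : H ⊗[k] N →ₗ[k] N) (cRN : N →ₗ[k] N ⊗[k] H) :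
    M ⊗[k] N →ₗ[k] N ⊗[k] M :=
  TensorProduct.map aLN aRM ∘ₗ tt k H M N H ∘ₗ TensorProduct.map cLM cRN

/-- coalgebra axioms for explicit comultiplication and counit -/
def IsCoalg (Δd : M →ₗ[k] M ⊗[k] M) (εd : M →ₗ[k] k) : Prop :=
  (∀ m : M, TensorProduct.lid k M (TensorProduct.map εd LinearMap.id (Δd m)) = m) ∧
  (∀ m : M, TensorProduct.rid k M (TensorProduct.map LinearMap.id εd (Δd m)) = m) ∧
  ∀ m : M, TensorProduct.assoc k M M M (TensorProduct.map Δd LinearMap.id (Δd m))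
    = TensorProduct.map LinearMap.id Δd (Δd m)

/-- `M` is a left `H`-comodule coalgebra -/
def IsLComodCoalg (cL : M →ₗ[k] H ⊗[k] M) (Δd : M →ₗ[k] M ⊗[k] M) (εd : M →ₗ[k] k) : Prop :=
  (∀ m : M,
    TensorProduct.map (μH k H) LinearMap.id (tt k H M H M (TensorProduct.map cL cL (Δd m)))
      = TensorProduct.map LinearMap.id Δd (cL m)) ∧
  ∀ m : M, TensorProduct.rid k H (TensorProduct.map LinearMap.id εd (cL m)) = εd m • (1 : H)

/-- `M` is a right `H`-comodule coalgebra -/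
def IsRComodCoalg (cR : M →ₗ[k] M ⊗[k] H) (Δd : M →ₗ[k] M ⊗[k] M) (εd : M →ₗ[k] k) : Prop :=
  (∀ m : M,
    TensorProduct.map LinearMap.id (μH k H) (tt k M H M H (TensorProduct.map cR cR (Δd m)))
      = TensorProduct.map Δd LinearMap.id (cR m)) ∧
  ∀ m : M, TensorProduct.lid k H (TensorProduct.map εd LinearMap.id (cR m)) = εd m • (1 : H)

/-- morphisms of LR(H) -/
def IsLRHom {M' : Type*} [AddCommGroup M'] [Module k M']
    (aLM : H ⊗[k] M →ₗ[k] M) (aRM : M ⊗[k] H →ₗ[k] M)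
    (cLM : M →ₗ[k] H ⊗[k] M) (cRM : M →ₗ[k] M ⊗[k] H)
    (aLM' : H ⊗[k] M' →ₗ[k] M') (aRM' : M' ⊗[k] H →ₗ[k] M')
    (cLM' : M' →ₗ[k] H ⊗[k] M') (cRM' : M' →ₗ[k] M' ⊗[k] H)
    (f : M →ₗ[k] M') : Prop :=
  (∀ (h : H) (m : M), f (aLM (h ⊗ₜ m)) = aLM' (h ⊗ₜ f m)) ∧
  (∀ (m : M) (h : H), f (aRM (m ⊗ₜ h)) = aRM' (f m ⊗ₜ h)) ∧
  (∀ m : M, cLM' (f m) = TensorProduct.map LinearMap.id f (cLM m)) ∧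
  (∀ m : M, cRM' (f m) = TensorProduct.map f LinearMap.id (cRM m))


end Conditions

section AlgebraConditions
variable (H : Type*) [Ring H] [Bialgebra k H]
variable {D : Type*} [Ring D] [Algebra k D]

/-- multiplication of `D` -/
def μD : D ⊗[k] D →ₗ[k] D := LinearMap.mul' k D

/-- `D` is a left `H`-module algebra -/
def IsLeftModuleAlgebra (aL : H ⊗[k] D →ₗ[k] D) : Prop :=
  (∀ h : H, aL (h ⊗ₜ (1 : D)) = εH k H h • (1 : D)) ∧
  ∀ (h : H) (c d : D),
    aL (h ⊗ₜ (c * d))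
      = μD k (TensorProduct.map aL aL (tt k H H D D (δH k H h ⊗ₜ (c ⊗ₜ d))))

/-- `D` is a right `H`-module algebra -/
def IsRightModuleAlgebra (aR : D ⊗[k] H →ₗ[k] D) : Prop :=
  (∀ h : H, aR ((1 : D) ⊗ₜ h) = εH k H h • (1 : D)) ∧
  ∀ (c d : D) (h : H),
    aR ((c * d) ⊗ₜ h)
      = μD k (TensorProduct.map aR aR (tt k D D H H ((c ⊗ₜ d) ⊗ₜ δH k H h)))

/-- `ε_D` is an algebra map -/
def CondCounitAlg (εd : D →ₗ[k] k) : Prop :=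
  εd 1 = 1 ∧ ∀ c d : D, εd (c * d) = εd c * εd d

/-- `ε_D(h·d) = ε(h)ε_D(d)` and `ε_D(d·h) = ε_D(d)ε(h)` -/
def CondCounitActs (aL : H ⊗[k] D →ₗ[k] D) (aR : D ⊗[k] H →ₗ[k] D) (εd : D →ₗ[k] k) : Prop :=
  ∀ (h : H) (d : D), εd (aL (h ⊗ₜ d)) = εH k H h * εd d ∧ εd (aR (d ⊗ₜ h)) = εd d * εH k H h

/-- unitality of the coactions and of the comultiplication of `D` -/
def CondUnits (cL : D →ₗ[k] H ⊗[k] D) (cR : D →ₗ[k] D ⊗[k] H) (Δd : D →ₗ[k] D ⊗[k] D) : Prop :=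
  cL 1 = 1 ⊗ₜ 1 ∧ cR 1 = 1 ⊗ₜ 1 ∧ Δd 1 = 1 ⊗ₜ 1

/-- both coactions of `D` are multiplicative -/
def CondCoactMul (cL : D →ₗ[k] H ⊗[k] D) (cR : D →ₗ[k] D ⊗[k] H) : Prop :=
  (∀ c d : D, cL (c * d)
      = TensorProduct.map (μH k H) (μD k) (tt k H D H D (cL c ⊗ₜ cL d))) ∧
  ∀ c d : D, cR (c * d)
      = TensorProduct.map (μD k) (μH k H) (tt k D H D H (cR c ⊗ₜ cR d))

/-- `Δ_D` is an `H`-bimodule map -/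
def CondComulAct (aL : H ⊗[k] D →ₗ[k] D) (aR : D ⊗[k] H →ₗ[k] D)
    (Δd : D →ₗ[k] D ⊗[k] D) : Prop :=
  (∀ (h : H) (d : D), Δd (aL (h ⊗ₜ d))
      = TensorProduct.map aL aL (tt k H H D D (δH k H h ⊗ₜ Δd d))) ∧
  ∀ (d : D) (h : H), Δd (aR (d ⊗ₜ h))
      = TensorProduct.map aR aR (tt k D D H H (Δd d ⊗ₜ δH k H h))

/-- `Δ_D(cd) = c₁(c₂⁽⁻¹⁾·d₁⁽⁰⁾) ⊗ (c₂⁽⁰⁾·d₁⁽¹⁾)d₂` -/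
def CondBraidMul (aL : H ⊗[k] D →ₗ[k] D) (aR : D ⊗[k] H →ₗ[k] D)
    (cL : D →ₗ[k] H ⊗[k] D) (cR : D →ₗ[k] D ⊗[k] H) (Δd : D →ₗ[k] D ⊗[k] D) : Prop :=
  ∀ c d : D, Δd (c * d)
    = TensorProduct.map (μD k) (μD k)
        (middle k (braid k H cL aR aL cR) (Δd c ⊗ₜ Δd d))

/-- `c⁽⁰⁾·d⁽⁻¹⁾ ⊗ c⁽¹⁾·d⁽⁰⁾ = c ⊗ d` -/
def Cond114 (aL : H ⊗[k] D →ₗ[k] D) (aR : D ⊗[k] H →ₗ[k] D)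
    (cL : D →ₗ[k] H ⊗[k] D) (cR : D →ₗ[k] D ⊗[k] H) : Prop :=
  ∀ c d : D, TensorProduct.map aR aL (tt k D H H D (cR c ⊗ₜ cL d)) = c ⊗ₜ d

/-- `(H, D)` is an L-R-admissible pair -/
def LRAdmissible (aL : H ⊗[k] D →ₗ[k] D) (aR : D ⊗[k] H →ₗ[k] D)
    (cL : D →ₗ[k] H ⊗[k] D) (cR : D →ₗ[k] D ⊗[k] H)
    (Δd : D →ₗ[k] D ⊗[k] D) (εd : D →ₗ[k] k) : Prop :=
  IsBimodule k H aL aR ∧ IsLeftModuleAlgebra k H aL ∧ IsRightModuleAlgebra k H aR ∧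
  IsBicomodule k H cL cR ∧ IsCoalg k Δd εd ∧
  IsLComodCoalg k H cL Δd εd ∧ IsRComodCoalg k H cR Δd εd ∧
  CondCounitAlg k εd ∧ CondCounitActs k H aL aR εd ∧ CondUnits k H cL cR Δd ∧
  CondCoactMul k H cL cR ∧ CondComulAct k H aL aR Δd ∧ CondBraidMul k H aL aR cL cR Δd ∧
  CondYDl k H aL cL ∧ CondLongLR k H aL cR ∧ CondYDr k H aR cR ∧ CondLongRL k H aR cL ∧
  Cond114 k H aL aR cL cR

/-- `Σ (d·h'₂) ⊗ h'₁` -/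
def Xel (aR : D ⊗[k] H →ₗ[k] D) (d : D) (h' : H) : D ⊗[k] H :=
  TensorProduct.map aR LinearMap.id
    ((TensorProduct.assoc k D H H).symm (d ⊗ₜ TensorProduct.comm k H H (δH k H h')))

/-- `Σ (h₁·d') ⊗ h₂` -/
def Yel (aL : H ⊗[k] D →ₗ[k] D) (h : H) (d' : D) : D ⊗[k] H :=
  TensorProduct.comm k H D
    (TensorProduct.map LinearMap.id aL
      (TensorProduct.assoc k H H D
        (TensorProduct.map (sw k H H) LinearMap.id (δH k H h ⊗ₜ d'))))

/-- the element `(d·h'₂)(h₁·d') ⊗ h₂h'₁` of the L-R-smash product -/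
def smashMulExpr (aL : H ⊗[k] D →ₗ[k] D) (aR : D ⊗[k] H →ₗ[k] D)
    (d : D) (h : H) (d' : D) (h' : H) : D ⊗[k] H :=
  TensorProduct.map (μD k) (μH k H ∘ₗ sw k H H)
    (tt k D H D H (Xel k H aR d h' ⊗ₜ Yel k H aL h d'))

end AlgebraConditions

section CoproductGeneric
variable (H : Type*) [Ring H] [Bialgebra k H]
variable {D : Type*} [AddCommGroup D] [Module k D]

/-- structure map of the L-R-smash coproduct:
`(d₁⊗d₂)⊗(h₁⊗h₂) ↦ (d₁⁽⁰⁾ ⊗ d₂⁽⁻¹⁾h₁) ⊗ (d₂⁽⁰⁾ ⊗ h₂d₁⁽¹⁾)` -/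
def Wmap (cL : D →ₗ[k] H ⊗[k] D) (cR : D →ₗ[k] D ⊗[k] H) :
    (D ⊗[k] D) ⊗[k] (H ⊗[k] H) →ₗ[k] (D ⊗[k] H) ⊗[k] (D ⊗[k] H) :=
  TensorProduct.map
      (TensorProduct.map LinearMap.id (μH k H) ∘ₗ asl k D H H)
      (TensorProduct.map LinearMap.id (μH k H ∘ₗ sw k H H) ∘ₗ asl k D H H
        ∘ₗ TensorProduct.map (sw k H D) LinearMap.id)
    ∘ₗ tt k (D ⊗[k] H) (H ⊗[k] D) H H
    ∘ₗ TensorProduct.map (tt k D H H D) LinearMap.id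
    ∘ₗ TensorProduct.map (TensorProduct.map cR cL) LinearMap.id

/-- counit of the L-R-smash coproduct -/
def smashCounit (εd : D →ₗ[k] k) : D ⊗[k] H →ₗ[k] k :=
  LinearMap.mul' k k ∘ₗ TensorProduct.map εd (εH k H)



end CoproductGeneric

/-- the trivial right action `d·h = ε(h)d` -/
def trivActR {D : Type*} [AddCommGroup D] [Module k D] (H : Type*) [Ring H] [Bialgebra k H] :
    D ⊗[k] H →ₗ[k] D :=
  (TensorProduct.rid k D).toLinearMap ∘ₗ TensorProduct.map LinearMap.id (εH k H)

/-- the trivial right coaction `d ↦ d ⊗ 1` -/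
def trivCoactR {D : Type*} [AddCommGroup D] [Module k D] (H : Type*) [Ring H] [Bialgebra k H] :
    D →ₗ[k] D ⊗[k] H :=
  TensorProduct.map LinearMap.id (Algebra.linearMap k H) ∘ₗ (TensorProduct.rid k D).symm.toLinearMap

/-- the trivial left action `h·d = ε(h)d` -/
def trivActL {D : Type*} [AddCommGroup D] [Module k D] (H : Type*) [Ring H] [Bialgebra k H] :
    H ⊗[k] D →ₗ[k] D :=
  (TensorProduct.lid k D).toLinearMap ∘ₗ TensorProduct.map (εH k H) LinearMap.id

/-- the trivial left coaction `d ↦ 1 ⊗ d` -/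
def trivCoactL {D : Type*} [AddCommGroup D] [Module k D] (H : Type*) [Ring H] [Bialgebra k H] :
    D →ₗ[k] H ⊗[k] D :=
  TensorProduct.map (Algebra.linearMap k H) LinearMap.id ∘ₗ (TensorProduct.lid k D).symm.toLinearMap

section DoubleBiproduct
variable (H : Type*) [Ring H] [Bialgebra k H]
variable (A B : Type*) [Ring A] [Algebra k A] [Ring B] [Algebra k B]

/-- braiding of the left-left Yetter-Drinfeld category: `x ⊗ y ↦ x⁽⁻¹⁾·y ⊗ x⁽⁰⁾` -/
def braidYDl (cA : A →ₗ[k] H ⊗[k] A) (aA : H ⊗[k] A →ₗ[k] A) :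
    A ⊗[k] A →ₗ[k] A ⊗[k] A :=
  sw k A A ∘ₗ TensorProduct.map LinearMap.id aA ∘ₗ asl k A H A
    ∘ₗ TensorProduct.map (sw k H A) LinearMap.id ∘ₗ TensorProduct.map cA LinearMap.id

/-- braiding of the right-right Yetter-Drinfeld category: `x ⊗ y ↦ y⁽⁰⁾ ⊗ x·y⁽¹⁾` -/
def braidYDr (cB : B →ₗ[k] B ⊗[k] H) (aB : B ⊗[k] H →ₗ[k] B) :
    B ⊗[k] B →ₗ[k] B ⊗[k] B :=
  TensorProduct.map LinearMap.id aB ∘ₗ asl k B B H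
    ∘ₗ TensorProduct.map (sw k B B) LinearMap.id ∘ₗ asr k B B H
    ∘ₗ TensorProduct.map LinearMap.id cB

/-- `A` is a bialgebra in the left-left Yetter-Drinfeld category over `H` -/
def YDlBialgebra (aA : H ⊗[k] A →ₗ[k] A) (cA : A →ₗ[k] H ⊗[k] A)
    (ΔA : A →ₗ[k] A ⊗[k] A) (εA : A →ₗ[k] k) : Prop :=
  IsLeftModule k H aA ∧ IsLeftComodule k H cA ∧ CondYDl k H aA cA ∧
  IsLeftModuleAlgebra k H aA ∧
  (∀ a a' : A, cA (a * a')
      = TensorProduct.map (μH k H) (μD k) (tt k H A H A (cA a ⊗ₜ cA a'))) ∧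
  cA 1 = 1 ⊗ₜ 1 ∧ IsCoalg k ΔA εA ∧ CondCounitAlg k εA ∧
  (∀ (h : H) (a : A), εA (aA (h ⊗ₜ a)) = εH k H h * εA a) ∧ ΔA 1 = 1 ⊗ₜ 1 ∧
  (∀ (h : H) (a : A), ΔA (aA (h ⊗ₜ a))
      = TensorProduct.map aA aA (tt k H H A A (δH k H h ⊗ₜ ΔA a))) ∧
  IsLComodCoalg k H cA ΔA εA ∧
  ∀ a a' : A, ΔA (a * a')
      = TensorProduct.map (μD k) (μD k)
          (middle k (braidYDl k H A cA aA) (ΔA a ⊗ₜ ΔA a'))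

/-- `B` is a bialgebra in the right-right Yetter-Drinfeld category over `H` -/
def YDrBialgebra (aB : B ⊗[k] H →ₗ[k] B) (cB : B →ₗ[k] B ⊗[k] H)
    (ΔB : B →ₗ[k] B ⊗[k] B) (εB : B →ₗ[k] k) : Prop :=
  IsRightModule k H aB ∧ IsRightComodule k H cB ∧ CondYDr k H aB cB ∧
  IsRightModuleAlgebra k H aB ∧
  (∀ b b' : B, cB (b * b')
      = TensorProduct.map (μD k) (μH k H) (tt k B H B H (cB b ⊗ₜ cB b'))) ∧
  cB 1 = 1 ⊗ₜ 1 ∧ IsCoalg k ΔB εB ∧ CondCounitAlg k εB ∧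
  (∀ (b : B) (h : H), εB (aB (b ⊗ₜ h)) = εB b * εH k H h) ∧ ΔB 1 = 1 ⊗ₜ 1 ∧
  (∀ (b : B) (h : H), ΔB (aB (b ⊗ₜ h))
      = TensorProduct.map aB aB (tt k B B H H (ΔB b ⊗ₜ δH k H h))) ∧
  IsRComodCoalg k H cB ΔB εB ∧
  ∀ b b' : B, ΔB (b * b')
      = TensorProduct.map (μD k) (μD k)
          (middle k (braidYDr k H B cB aB) (ΔB b ⊗ₜ ΔB b'))

/-- the trivial-pairing condition `b² ▷ a² ⊗ b¹ ◁ a¹ = a ⊗ b` -/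
def PairingTrivial (aA : H ⊗[k] A →ₗ[k] A) (cA : A →ₗ[k] H ⊗[k] A)
    (aB : B ⊗[k] H →ₗ[k] B) (cB : B →ₗ[k] B ⊗[k] H) : Prop :=
  ∀ (a : A) (b : B),
    sw k B A (TensorProduct.map aB aA (tt k B H H A (cB b ⊗ₜ cA a))) = a ⊗ₜ b

/-- `Σ a(h₁ ▷ a') ⊗ h₂` -/
def P1 (aA : H ⊗[k] A →ₗ[k] A) (a : A) (h : H) (a' : A) : A ⊗[k] H :=
  TensorProduct.map (μD k) LinearMap.id
    ((TensorProduct.assoc k A A H).symm (a ⊗ₜ Yel k H aA h a'))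

/-- `Σ h'₁ ⊗ (b ◁ h'₂)b'` -/
def P2 (aB : B ⊗[k] H →ₗ[k] B) (b : B) (h' : H) (b' : B) : H ⊗[k] B :=
  TensorProduct.map LinearMap.id (μD k)
    (TensorProduct.assoc k H B B
      ((sw k B H
          (TensorProduct.map aB LinearMap.id
            ((TensorProduct.assoc k B H H).symm
              (TensorProduct.map LinearMap.id (sw k H H) (b ⊗ₜ δH k H h'))))) ⊗ₜ b'))

/-- `(x⊗u)⊗(v⊗y) ↦ (x ⊗ uv) ⊗ y` -/
def combineAHB : (A ⊗[k] H) ⊗[k] (H ⊗[k] B) →ₗ[k] (A ⊗[k] H) ⊗[k] B :=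
  TensorProduct.map (TensorProduct.map LinearMap.id (μH k H)) LinearMap.id
    ∘ₗ TensorProduct.map (asl k A H H) LinearMap.id
    ∘ₗ (TensorProduct.assoc k (A ⊗[k] H) H B).symm.toLinearMap

/-- the element `a(h₁▷a') # h₂h'₁ # (b◁h'₂)b'` of the double biproduct -/
def dblMulExpr (aA : H ⊗[k] A →ₗ[k] A) (aB : B ⊗[k] H →ₗ[k] B)
    (a : A) (h : H) (b : B) (a' : A) (h' : H) (b' : B) : (A ⊗[k] H) ⊗[k] B :=
  combineAHB k H A B (P1 k H A aA a h a' ⊗ₜ P2 k H B aB b h' b')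

/-- comultiplication map of the double biproduct:
`((a₁⊗a₂)⊗(h₁⊗h₂))⊗(b₁⊗b₂) ↦ (a₁ # a₂¹h₁ # b₁¹) ⊗ (a₂² # h₂b₁² # b₂)` -/
def Wd (cA : A →ₗ[k] H ⊗[k] A) (cB : B →ₗ[k] B ⊗[k] H) :
    ((A ⊗[k] A) ⊗[k] (H ⊗[k] H)) ⊗[k] (B ⊗[k] B) →ₗ[k]
      ((A ⊗[k] H) ⊗[k] B) ⊗[k] ((A ⊗[k] H) ⊗[k] B) :=
  TensorProduct.map LinearMap.id
      (TensorProduct.map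
          (TensorProduct.map LinearMap.id (μH k H) ∘ₗ asl k A H H ∘ₗ sw k H (A ⊗[k] H))
          LinearMap.id
        ∘ₗ (TensorProduct.assoc k H (A ⊗[k] H) B).symm.toLinearMap)
    ∘ₗ (TensorProduct.assoc k ((A ⊗[k] H) ⊗[k] B) H ((A ⊗[k] H) ⊗[k] B)).toLinearMap
    ∘ₗ TensorProduct.map (TensorProduct.assoc k (A ⊗[k] H) B H).symm.toLinearMap LinearMap.id
    ∘ₗ tt k (A ⊗[k] H) (A ⊗[k] H) (B ⊗[k] H) B
    ∘ₗ TensorProduct.map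
        (TensorProduct.map (TensorProduct.map LinearMap.id (μH k H) ∘ₗ asl k A H H) LinearMap.id)
        LinearMap.id
    ∘ₗ TensorProduct.map (tt k (A ⊗[k] H) A H H) LinearMap.id
    ∘ₗ TensorProduct.map
        (TensorProduct.map
          ((TensorProduct.assoc k A H A).symm.toLinearMap ∘ₗ TensorProduct.map LinearMap.id cA)
          LinearMap.id)
        (TensorProduct.map cB LinearMap.id)

/-- counit of the double biproduct -/
def dblCounit (εA : A →ₗ[k] k) (εB : B →ₗ[k] k) : (A ⊗[k] H) ⊗[k] B →ₗ[k] k :=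
  LinearMap.mul' k k
    ∘ₗ TensorProduct.map (LinearMap.mul' k k ∘ₗ TensorProduct.map εA (εH k H)) εB

/-- induced left action on `D = A ⊗ B` -/
def dActL (aA : H ⊗[k] A →ₗ[k] A) : H ⊗[k] (A ⊗[k] B) →ₗ[k] A ⊗[k] B :=
  TensorProduct.map aA LinearMap.id ∘ₗ asr k H A B

/-- induced right action on `D = A ⊗ B` -/
def dActR (aB : B ⊗[k] H →ₗ[k] B) : (A ⊗[k] B) ⊗[k] H →ₗ[k] A ⊗[k] B :=
  TensorProduct.map LinearMap.id aB ∘ₗ asl k A B H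

/-- induced left coaction on `D = A ⊗ B` -/
def dCoactL (cA : A →ₗ[k] H ⊗[k] A) : A ⊗[k] B →ₗ[k] H ⊗[k] (A ⊗[k] B) :=
  asl k H A B ∘ₗ TensorProduct.map cA LinearMap.id

/-- induced right coaction on `D = A ⊗ B` -/
def dCoactR (cB : B →ₗ[k] B ⊗[k] H) : A ⊗[k] B →ₗ[k] (A ⊗[k] B) ⊗[k] H :=
  asr k A B H ∘ₗ TensorProduct.map LinearMap.id cB

/-- tensor product comultiplication on `D = A ⊗ B` -/
def dComul (ΔA : A →ₗ[k] A ⊗[k] A) (ΔB : B →ₗ[k] B ⊗[k] B) :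
    A ⊗[k] B →ₗ[k] (A ⊗[k] B) ⊗[k] (A ⊗[k] B) :=
  tt k A A B B ∘ₗ TensorProduct.map ΔA ΔB

/-- tensor product counit on `D = A ⊗ B` -/
def dCounit (εA : A →ₗ[k] k) (εB : B →ₗ[k] k) : A ⊗[k] B →ₗ[k] k :=
  LinearMap.mul' k k ∘ₗ TensorProduct.map εA εB

/-- `(a ⊗ b) ⊗ h ↦ (a ⊗ h) ⊗ b` -/
def phiAB : (A ⊗[k] B) ⊗[k] H →ₗ[k] (A ⊗[k] H) ⊗[k] B :=
  asr k A H B ∘ₗ TensorProduct.map LinearMap.id (sw k B H) ∘ₗ asl k A B H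

end DoubleBiproduct

section Pointwise
variable (H : Type*) [Ring H] [Bialgebra k H]
variable (M N : Type*) [AddCommGroup M] [Module k M] [AddCommGroup N] [Module k N]

/-- left action on `M ⊗ N` through the first factor -/
def pActL (aLM : H ⊗[k] M →ₗ[k] M) : H ⊗[k] (M ⊗[k] N) →ₗ[k] M ⊗[k] N :=
  TensorProduct.map aLM LinearMap.id ∘ₗ asr k H M N

/-- right action on `M ⊗ N` through the second factor -/
def pActR (aRN : N ⊗[k] H →ₗ[k] N) : (M ⊗[k] N) ⊗[k] H →ₗ[k] M ⊗[k] N :=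
  TensorProduct.map LinearMap.id aRN ∘ₗ asl k M N H

/-- left coaction on `M ⊗ N` through the first factor -/
def pCoactL (cLM : M →ₗ[k] H ⊗[k] M) : M ⊗[k] N →ₗ[k] H ⊗[k] (M ⊗[k] N) :=
  asl k H M N ∘ₗ TensorProduct.map cLM LinearMap.id

/-- right coaction on `M ⊗ N` through the second factor -/
def pCoactR (cRN : N →ₗ[k] N ⊗[k] H) : M ⊗[k] N →ₗ[k] (M ⊗[k] N) ⊗[k] H :=
  asr k M N H ∘ₗ TensorProduct.map LinearMap.id cRN

end Pointwise

section Identities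
variable (H : Type*) [Ring H] [Bialgebra k H]
variable (D : Type*) [Ring D] [Algebra k D]

/-- `c₂ ⊗ (h₁ ⊗ (d₁⁽⁰⁾ ⊗ d₁⁽¹⁾)) ↦ (c₂⁽⁻¹⁾h₁·d₁⁽⁰⁾) ⊗ (c₂⁽⁰⁾·d₁⁽¹⁾)` -/
def Fmap (aL : H ⊗[k] D →ₗ[k] D) (aR : D ⊗[k] H →ₗ[k] D) (cL : D →ₗ[k] H ⊗[k] D) :
    D ⊗[k] (H ⊗[k] (D ⊗[k] H)) →ₗ[k] D ⊗[k] D :=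
  TensorProduct.map aL LinearMap.id
    ∘ₗ asr k H D D
    ∘ₗ TensorProduct.map LinearMap.id
        (sw k D D ∘ₗ TensorProduct.map aR LinearMap.id ∘ₗ asr k D H D
          ∘ₗ TensorProduct.map LinearMap.id (sw k D H))
    ∘ₗ TensorProduct.map (μH k H) LinearMap.id
    ∘ₗ tt k H D H (D ⊗[k] H)
    ∘ₗ TensorProduct.map cL LinearMap.id

/-- `(h₁⊗h₂)⊗(c⊗d) ↦ [c(h₁·d)]₁ ⊗ ([c(h₁·d)]₂⁽⁻¹⁾h₂ ⊗ [c(h₁·d)]₂⁽⁰⁾)` -/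
def L3map (aL : H ⊗[k] D →ₗ[k] D) (cL : D →ₗ[k] H ⊗[k] D) (Δd : D →ₗ[k] D ⊗[k] D) :
    (H ⊗[k] H) ⊗[k] (D ⊗[k] D) →ₗ[k] D ⊗[k] (H ⊗[k] D) :=
  TensorProduct.map LinearMap.id (TensorProduct.map (μH k H) LinearMap.id)
    ∘ₗ TensorProduct.map LinearMap.id (asr k H H D)
    ∘ₗ asl k D H (H ⊗[k] D)
    ∘ₗ tt k D H H D
    ∘ₗ TensorProduct.map (sw k H D) LinearMap.id
    ∘ₗ asr k H D (H ⊗[k] D)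
    ∘ₗ TensorProduct.map LinearMap.id (TensorProduct.map LinearMap.id cL)
    ∘ₗ TensorProduct.map LinearMap.id Δd
    ∘ₗ TensorProduct.map LinearMap.id (μD k)
    ∘ₗ asl k H D D
    ∘ₗ TensorProduct.map LinearMap.id aL
    ∘ₗ tt k H H D D
    ∘ₗ TensorProduct.map (sw k H H) LinearMap.id

/-- `((h₁⊗h₂)⊗h₃)⊗((c₁⊗c₂)⊗(d₁⊗d₂)) ↦`
`c₁(c₂⁽⁻¹⁾h₁·d₁⁽⁰⁾) ⊗ (c₂⁽⁰⁾⁽⁻¹⁾h₂d₂⁽⁻¹⁾ ⊗ (c₂⁽⁰⁾⁽⁰⁾·d₁⁽¹⁾)(h₃·d₂⁽⁰⁾))` -/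
def R3map (aL : H ⊗[k] D →ₗ[k] D) (aR : D ⊗[k] H →ₗ[k] D)
    (cL : D →ₗ[k] H ⊗[k] D) (cR : D →ₗ[k] D ⊗[k] H) :
    ((H ⊗[k] H) ⊗[k] H) ⊗[k] ((D ⊗[k] D) ⊗[k] (D ⊗[k] D)) →ₗ[k]
      D ⊗[k] (H ⊗[k] D) :=
  TensorProduct.map (μD k) LinearMap.id
    ∘ₗ asr k D D (H ⊗[k] D)
    ∘ₗ TensorProduct.map LinearMap.id
        (asl k D H D
          ∘ₗ TensorProduct.map LinearMap.id (μD k)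
          ∘ₗ TensorProduct.map (TensorProduct.map aL (μH k H)) (TensorProduct.map aR aL)
          ∘ₗ TensorProduct.map (tt k H H D H) (tt k D H H D)
          ∘ₗ tt k (H ⊗[k] H) (D ⊗[k] H) (D ⊗[k] H) (H ⊗[k] D)
          ∘ₗ TensorProduct.map LinearMap.id (tt k D H H D))
    ∘ₗ asl k D ((H ⊗[k] H) ⊗[k] (D ⊗[k] H)) ((D ⊗[k] H) ⊗[k] (H ⊗[k] D))
    ∘ₗ TensorProduct.map
        (TensorProduct.map LinearMap.id
          (TensorProduct.map (TensorProduct.map (μH k H) (μH k H)) LinearMap.id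
            ∘ₗ TensorProduct.map (tt k H H H H) LinearMap.id
            ∘ₗ tt k (H ⊗[k] H) D (H ⊗[k] H) H))
        LinearMap.id
    ∘ₗ TensorProduct.map (asl k D ((H ⊗[k] H) ⊗[k] D) ((H ⊗[k] H) ⊗[k] H)) LinearMap.id
    ∘ₗ TensorProduct.map (sw k ((H ⊗[k] H) ⊗[k] H) (D ⊗[k] ((H ⊗[k] H) ⊗[k] D))) LinearMap.id
    ∘ₗ asr k ((H ⊗[k] H) ⊗[k] H) (D ⊗[k] ((H ⊗[k] H) ⊗[k] D))
        ((D ⊗[k] H) ⊗[k] (H ⊗[k] D))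
    ∘ₗ TensorProduct.map LinearMap.id
        (TensorProduct.map (TensorProduct.map LinearMap.id (asr k H H D)) LinearMap.id)
    ∘ₗ TensorProduct.map LinearMap.id
        (TensorProduct.map
          (TensorProduct.map LinearMap.id (TensorProduct.map LinearMap.id cL ∘ₗ cL))
          (TensorProduct.map cR cL))

end Identities

section Radford
variable (H : Type*) [Ring H] [Bialgebra k H]
variable (D : Type*) [Ring D] [Algebra k D]

/-- Radford's admissible-pair conditions for a left module algebra, left comodule
coalgebra `D` -/
def RadfordAdmissible (aL : H ⊗[k] D →ₗ[k] D) (cL : D →ₗ[k] H ⊗[k] D)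
    (Δd : D →ₗ[k] D ⊗[k] D) (εd : D →ₗ[k] k) : Prop :=
  IsLeftModule k H aL ∧ IsLeftModuleAlgebra k H aL ∧ IsLeftComodule k H cL ∧
  IsCoalg k Δd εd ∧ IsLComodCoalg k H cL Δd εd ∧ CondCounitAlg k εd ∧
  (∀ (h : H) (d : D), εd (aL (h ⊗ₜ d)) = εH k H h * εd d) ∧
  Δd 1 = 1 ⊗ₜ 1 ∧ cL 1 = 1 ⊗ₜ 1 ∧
  (∀ c d : D, cL (c * d)
      = TensorProduct.map (μH k H) (μD k) (tt k H D H D (cL c ⊗ₜ cL d))) ∧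
  (∀ (h : H) (d : D), Δd (aL (h ⊗ₜ d))
      = TensorProduct.map aL aL (tt k H H D D (δH k H h ⊗ₜ Δd d))) ∧
  (∀ c d : D, Δd (c * d)
      = TensorProduct.map (μD k) (μD k)
          (middle k (braidYDl k H D cL aL) (Δd c ⊗ₜ Δd d))) ∧
  CondYDl k H aL cL

/-- the element `d(h₁·d') ⊗ h₂h'` of the Radford biproduct -/
def radMulExpr (aL : H ⊗[k] D →ₗ[k] D) (d : D) (h : H) (d' : D) (h' : H) : D ⊗[k] H :=
  TensorProduct.map (μD k) (μH k H ∘ₗ sw k H H)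
    (tt k D H D H ((d ⊗ₜ h') ⊗ₜ Yel k H aL h d'))

/-- comultiplication map of the Radford biproduct:
`(d₁⊗d₂)⊗(h₁⊗h₂) ↦ (d₁ ⊗ d₂⁽⁻¹⁾h₁) ⊗ (d₂⁽⁰⁾ ⊗ h₂)` -/
def WRad (cL : D →ₗ[k] H ⊗[k] D) :
    (D ⊗[k] D) ⊗[k] (H ⊗[k] H) →ₗ[k] (D ⊗[k] H) ⊗[k] (D ⊗[k] H) :=
  TensorProduct.map (TensorProduct.map LinearMap.id (μH k H) ∘ₗ asl k D H H) LinearMap.id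
    ∘ₗ tt k (D ⊗[k] H) D H H
    ∘ₗ TensorProduct.map (asr k D H D) LinearMap.id
    ∘ₗ TensorProduct.map (TensorProduct.map LinearMap.id cL) LinearMap.id

/-- `(h₁·d) ⊗ h₂` reversed version: `(h₂·d) ⊗ h₁` -/
def Y2el (aL : H ⊗[k] D →ₗ[k] D) (h : H) (d : D) : D ⊗[k] H :=
  TensorProduct.comm k H D
    (TensorProduct.map LinearMap.id aL (TensorProduct.assoc k H H D (δH k H h ⊗ₜ d)))

/-- `(d·h₁) ⊗ h₂` -/
def X1el (aR : D ⊗[k] H →ₗ[k] D) (d : D) (h : H) : D ⊗[k] H :=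
  TensorProduct.map aR LinearMap.id ((TensorProduct.assoc k D H H).symm (d ⊗ₜ δH k H h))

end Radford
end LRPaper

namespace LRPaper

set_option synthInstance.maxHeartbeats 1000000
set_option maxHeartbeats 1000000
section
variable {k : Type*} [CommRing k] {H : Type*} [Ring H] [Bialgebra k H]
variable {A B C E M N P Q : Type*} [AddCommGroup A] [Module k A] [AddCommGroup B] [Module k B]
  [AddCommGroup C] [Module k C] [AddCommGroup E] [Module k E]
  [AddCommGroup M] [Module k M] [AddCommGroup N] [Module k N]
  [AddCommGroup P] [Module k P] [AddCommGroup Q] [Module k Q]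

@[simp] lemma tt_tmul (a : A) (b : B) (c : C) (e : E) :
    tt k A B C E ((a ⊗ₜ b) ⊗ₜ (c ⊗ₜ e)) = (a ⊗ₜ c) ⊗ₜ (b ⊗ₜ e) := rfl
@[simp] lemma asl_tmul (a : A) (b : B) (c : C) :
    asl k A B C ((a ⊗ₜ b) ⊗ₜ c) = a ⊗ₜ (b ⊗ₜ c) := rfl
@[simp] lemma asr_tmul (a : A) (b : B) (c : C) :
    asr k A B C (a ⊗ₜ (b ⊗ₜ c)) = (a ⊗ₜ b) ⊗ₜ c := rfl
@[simp] lemma sw_tmul (a : A) (b : B) : sw k A B (a ⊗ₜ b) = b ⊗ₜ a := rfl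
@[simp] lemma muH_tmul (a b : H) : μH k H (a ⊗ₜ b) = a * b := rfl
@[simp] lemma deltaH_one : δH k H (1 : H) = (1:H) ⊗ₜ (1:H) := by
  simp [δH, Algebra.TensorProduct.one_def]
lemma deltaH_mul (h h' : H) : δH k H (h * h') = δH k H h * δH k H h' := by simp [δH]
@[simp] lemma epsH_one : εH k H (1 : H) = 1 := by simp [εH]
lemma epsH_mul (h h' : H) : εH k H (h * h') = εH k H h * εH k H h' := by simp [εH]

/-- glue for diagonal left action -/
def gAL (aLM : H ⊗[k] M →ₗ[k] M) (aLN : H ⊗[k] N →ₗ[k] N) :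
    (H ⊗[k] H) ⊗[k] (M ⊗[k] N) →ₗ[k] M ⊗[k] N :=
  TensorProduct.map aLM aLN ∘ₗ tt k H H M N
/-- glue for diagonal right action -/
def gAR (aRM : M ⊗[k] H →ₗ[k] M) (aRN : N ⊗[k] H →ₗ[k] N) :
    (M ⊗[k] N) ⊗[k] (H ⊗[k] H) →ₗ[k] M ⊗[k] N :=
  TensorProduct.map aRM aRN ∘ₗ tt k M N H H
/-- glue for codiagonal left coaction -/
def gBL (M N : Type*) [AddCommGroup M] [Module k M] [AddCommGroup N] [Module k N] :
    (H ⊗[k] M) ⊗[k] (H ⊗[k] N) →ₗ[k] H ⊗[k] (M ⊗[k] N) :=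
  TensorProduct.map (μH k H) LinearMap.id ∘ₗ tt k H M H N
/-- glue for codiagonal right coaction -/
def gBR (M N : Type*) [AddCommGroup M] [Module k M] [AddCommGroup N] [Module k N] :
    (M ⊗[k] H) ⊗[k] (N ⊗[k] H) →ₗ[k] (M ⊗[k] N) ⊗[k] H :=
  TensorProduct.map LinearMap.id (μH k H) ∘ₗ tt k M H N H

@[simp] lemma gAL_tmul (aLM : H ⊗[k] M →ₗ[k] M) (aLN : H ⊗[k] N →ₗ[k] N)
    (a b : H) (m : M) (n : N) :
    gAL aLM aLN ((a ⊗ₜ b) ⊗ₜ (m ⊗ₜ n)) = aLM (a ⊗ₜ m) ⊗ₜ aLN (b ⊗ₜ n) := rfl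
@[simp] lemma gAR_tmul (aRM : M ⊗[k] H →ₗ[k] M) (aRN : N ⊗[k] H →ₗ[k] N)
    (a b : H) (m : M) (n : N) :
    gAR aRM aRN ((m ⊗ₜ n) ⊗ₜ (a ⊗ₜ b)) = aRM (m ⊗ₜ a) ⊗ₜ aRN (n ⊗ₜ b) := rfl
@[simp] lemma gBL_tmul (a b : H) (m : M) (n : N) :
    gBL (k := k) M N ((a ⊗ₜ m) ⊗ₜ (b ⊗ₜ n)) = (a * b) ⊗ₜ (m ⊗ₜ n) := rfl
@[simp] lemma gBR_tmul (a b : H) (m : M) (n : N) :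
    gBR (k := k) M N ((m ⊗ₜ a) ⊗ₜ (n ⊗ₜ b)) = (m ⊗ₜ n) ⊗ₜ (a * b) := rfl

lemma tActL_eq (aLM : H ⊗[k] M →ₗ[k] M) (aLN : H ⊗[k] N →ₗ[k] N) (h : H) (x : M ⊗[k] N) :
    tActL k H aLM aLN (h ⊗ₜ x) = gAL aLM aLN (δH k H h ⊗ₜ x) := rfl
lemma tActR_eq (aRM : M ⊗[k] H →ₗ[k] M) (aRN : N ⊗[k] H →ₗ[k] N) (h : H) (x : M ⊗[k] N) :
    tActR k H aRM aRN (x ⊗ₜ h) = gAR aRM aRN (x ⊗ₜ δH k H h) := rfl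
lemma tCoactL_eq (cLM : M →ₗ[k] H ⊗[k] M) (cLN : N →ₗ[k] H ⊗[k] N) (m : M) (n : N) :
    tCoactL k H cLM cLN (m ⊗ₜ n) = gBL (k := k) M N (cLM m ⊗ₜ cLN n) := rfl
lemma tCoactR_eq (cRM : M →ₗ[k] M ⊗[k] H) (cRN : N →ₗ[k] N ⊗[k] H) (m : M) (n : N) :
    tCoactR k H cRM cRN (m ⊗ₜ n) = gBR (k := k) M N (cRM m ⊗ₜ cRN n) := rfl

end

section
variable {k : Type*} [CommRing k] {H : Type*} [Ring H] [Bialgebra k H]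
variable {M N : Type*} [AddCommGroup M] [Module k M] [AddCommGroup N] [Module k N]
variable {aLM : H ⊗[k] M →ₗ[k] M} {aRM : M ⊗[k] H →ₗ[k] M}
  {cLM : M →ₗ[k] H ⊗[k] M} {cRM : M →ₗ[k] M ⊗[k] H}
  {aLN : H ⊗[k] N →ₗ[k] N} {aRN : N ⊗[k] H →ₗ[k] N}
  {cLN : N →ₗ[k] H ⊗[k] N} {cRN : N →ₗ[k] N ⊗[k] H}

lemma gAL_one (hM : IsLeftModule k H aLM) (hN : IsLeftModule k H aLN) (x : M ⊗[k] N) :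
    gAL aLM aLN (((1:H) ⊗ₜ (1:H)) ⊗ₜ x) = x := by
  induction x using TensorProduct.induction_on with
  | zero => simp
  | tmul m n => simp [hM.1, hN.1]
  | add x y hx hy => simp [tmul_add, hx, hy]

lemma gAL_mul (hM : IsLeftModule k H aLM) (hN : IsLeftModule k H aLN)
    (u v : H ⊗[k] H) (x : M ⊗[k] N) :
    gAL aLM aLN ((u * v) ⊗ₜ x) = gAL aLM aLN (u ⊗ₜ gAL aLM aLN (v ⊗ₜ x)) := by
  induction u using TensorProduct.induction_on with
  | zero => simp
  | add u u' hu hu' => simp [add_mul, add_tmul, hu, hu']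
  | tmul a b =>
    induction v using TensorProduct.induction_on with
    | zero => simp
    | add v v' hv hv' => simp [mul_add, add_tmul, tmul_add, hv, hv']
    | tmul c d =>
      induction x using TensorProduct.induction_on with
      | zero => simp
      | add x y hx hy =>
        simp only [Algebra.TensorProduct.tmul_mul_tmul] at hx hy ⊢
        simp [tmul_add, hx, hy]
      | tmul m n =>
        simp [Algebra.TensorProduct.tmul_mul_tmul, hM.2, hN.2]

lemma tensor_leftModule (hM : IsLeftModule k H aLM) (hN : IsLeftModule k H aLN) :
    IsLeftModule k H (tActL k H aLM aLN) := by
  constructor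
  · intro x; rw [tActL_eq, deltaH_one, gAL_one hM hN]
  · intro h h' x
    rw [tActL_eq, deltaH_mul, gAL_mul hM hN, tActL_eq, tActL_eq]

lemma gAR_one (hM : IsRightModule k H aRM) (hN : IsRightModule k H aRN) (x : M ⊗[k] N) :
    gAR aRM aRN (x ⊗ₜ ((1:H) ⊗ₜ (1:H))) = x := by
  induction x using TensorProduct.induction_on with
  | zero => simp
  | tmul m n => simp [hM.1, hN.1]
  | add x y hx hy => simp [add_tmul, hx, hy]

lemma gAR_mul (hM : IsRightModule k H aRM) (hN : IsRightModule k H aRN)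
    (u v : H ⊗[k] H) (x : M ⊗[k] N) :
    gAR aRM aRN (x ⊗ₜ (u * v)) = gAR aRM aRN (gAR aRM aRN (x ⊗ₜ u) ⊗ₜ v) := by
  induction u using TensorProduct.induction_on with
  | zero => simp
  | add u u' hu hu' => simp [add_mul, tmul_add, add_tmul, hu, hu']
  | tmul a b =>
    induction v using TensorProduct.induction_on with
    | zero => simp
    | add v v' hv hv' => simp [mul_add, tmul_add, hv, hv']
    | tmul c d =>
      induction x using TensorProduct.induction_on with
      | zero => simp
      | add x y hx hy =>
        simp only [Algebra.TensorProduct.tmul_mul_tmul] at hx hy ⊢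
        simp [add_tmul, hx, hy]
      | tmul m n =>
        simp [Algebra.TensorProduct.tmul_mul_tmul, hM.2, hN.2]

lemma tensor_rightModule (hM : IsRightModule k H aRM) (hN : IsRightModule k H aRN) :
    IsRightModule k H (tActR k H aRM aRN) := by
  constructor
  · intro x; rw [tActR_eq, deltaH_one, gAR_one hM hN]
  · intro x h h'
    rw [tActR_eq, deltaH_mul, gAR_mul hM hN, tActR_eq, tActR_eq]

lemma gA_compat (hM : ∀ (h : H) (m : M) (h' : H), aRM (aLM (h ⊗ₜ m) ⊗ₜ h') = aLM (h ⊗ₜ aRM (m ⊗ₜ h')))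
    (hN : ∀ (h : H) (n : N) (h' : H), aRN (aLN (h ⊗ₜ n) ⊗ₜ h') = aLN (h ⊗ₜ aRN (n ⊗ₜ h')))
    (u v : H ⊗[k] H) (x : M ⊗[k] N) :
    gAR aRM aRN (gAL aLM aLN (u ⊗ₜ x) ⊗ₜ v) = gAL aLM aLN (u ⊗ₜ gAR aRM aRN (x ⊗ₜ v)) := by
  induction u using TensorProduct.induction_on with
  | zero => simp
  | add u u' hu hu' => simp [add_tmul, hu, hu']
  | tmul a b =>
    induction v using TensorProduct.induction_on with
    | zero => simp
    | add v v' hv hv' => simp [tmul_add, hv, hv']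
    | tmul c d =>
      induction x using TensorProduct.induction_on with
      | zero => simp
      | add x y hx hy => simp [tmul_add, add_tmul, hx, hy]
      | tmul m n => simp [hM, hN]

lemma tensor_bimodule (hM : IsBimodule k H aLM aRM) (hN : IsBimodule k H aLN aRN) :
    IsBimodule k H (tActL k H aLM aLN) (tActR k H aRM aRN) := by
  refine ⟨tensor_leftModule hM.1 hN.1, tensor_rightModule hM.2.1 hN.2.1, ?_⟩
  intro h x h'
  rw [tActL_eq, tActR_eq, tActR_eq, tActL_eq, gA_compat hM.2.2 hN.2.2]

end

section
variable {k : Type*} [CommRing k] {H : Type*} [Ring H] [Bialgebra k H]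
variable {M N : Type*} [AddCommGroup M] [Module k M] [AddCommGroup N] [Module k N]
variable {cLM : M →ₗ[k] H ⊗[k] M} {cRM : M →ₗ[k] M ⊗[k] H}
  {cLN : N →ₗ[k] H ⊗[k] N} {cRN : N →ₗ[k] N ⊗[k] H}

-- counit helper
lemma gBL_counit (p : H ⊗[k] M) (q : H ⊗[k] N) :
    TensorProduct.lid k (M ⊗[k] N)
      (TensorProduct.map (εH k H) LinearMap.id (gBL (k := k) M N (p ⊗ₜ q)))
      = TensorProduct.lid k M (TensorProduct.map (εH k H) LinearMap.id p)
          ⊗ₜ TensorProduct.lid k N (TensorProduct.map (εH k H) LinearMap.id q) := by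
  induction p using TensorProduct.induction_on with
  | zero => simp
  | add p p' hp hp' => simp [add_tmul, hp, hp']
  | tmul a m =>
    induction q using TensorProduct.induction_on with
    | zero => simp
    | add q q' hq hq' => simp [tmul_add, hq, hq']
    | tmul b n => simp [epsH_mul, smul_tmul, mul_smul, smul_comm (εH k H b) (εH k H a)]

lemma gBL_coassoc_sub (u v : H ⊗[k] H) (m : M) (n : N) :
    TensorProduct.assoc k H H (M ⊗[k] N) ((u * v) ⊗ₜ (m ⊗ₜ n))
      = TensorProduct.map LinearMap.id (gBL (k := k) M N)
          (gBL (k := k) (H ⊗[k] M) (H ⊗[k] N)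
            ((TensorProduct.assoc k H H M (u ⊗ₜ m)) ⊗ₜ (TensorProduct.assoc k H H N (v ⊗ₜ n)))) := by
  induction u using TensorProduct.induction_on with
  | zero => simp
  | add u u' hu hu' => simp [add_mul, add_tmul, hu, hu']
  | tmul a a' =>
    induction v using TensorProduct.induction_on with
    | zero => simp
    | add v v' hv hv' =>
      simp [mul_add, add_tmul, tmul_add, hv, hv']
    | tmul b b' => simp [Algebra.TensorProduct.tmul_mul_tmul]

lemma gBL_nat1 (p : H ⊗[k] M) (q : H ⊗[k] N) :
    TensorProduct.map LinearMap.id (tCoactL k H cLM cLN) (gBL (k := k) M N (p ⊗ₜ q))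
      = TensorProduct.map LinearMap.id (gBL (k := k) M N)
          (gBL (k := k) (H ⊗[k] M) (H ⊗[k] N)
            ((TensorProduct.map LinearMap.id cLM p) ⊗ₜ (TensorProduct.map LinearMap.id cLN q))) := by
  induction p using TensorProduct.induction_on with
  | zero => simp
  | add p p' hp hp' => simp [add_tmul, hp, hp']
  | tmul a m =>
    induction q using TensorProduct.induction_on with
    | zero => simp
    | add q q' hq hq' => simp [tmul_add, hq, hq']
    | tmul b n => simp [tCoactL_eq]

lemma gBL_nat2 (p : H ⊗[k] M) (q : H ⊗[k] N) :
    TensorProduct.assoc k H H (M ⊗[k] N)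
        (TensorProduct.map (δH k H) LinearMap.id (gBL (k := k) M N (p ⊗ₜ q)))
      = TensorProduct.map LinearMap.id (gBL (k := k) M N)
          (gBL (k := k) (H ⊗[k] M) (H ⊗[k] N)
            ((TensorProduct.assoc k H H M (TensorProduct.map (δH k H) LinearMap.id p))
              ⊗ₜ (TensorProduct.assoc k H H N (TensorProduct.map (δH k H) LinearMap.id q)))) := by
  induction p using TensorProduct.induction_on with
  | zero => simp
  | add p p' hp hp' => simp [add_tmul, hp, hp']
  | tmul a m =>
    induction q using TensorProduct.induction_on with
    | zero => simp
    | add q q' hq hq' => simp [tmul_add, hq, hq']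
    | tmul b n =>
      have := gBL_coassoc_sub (k := k) (H := H) (δH k H a) (δH k H b) m n
      simpa [deltaH_mul] using this

lemma tensor_leftComodule (hM : IsLeftComodule k H cLM) (hN : IsLeftComodule k H cLN) :
    IsLeftComodule k H (tCoactL k H cLM cLN) := by
  constructor
  · intro x
    induction x using TensorProduct.induction_on with
    | zero => simp
    | add x y hx hy => simp only [map_add, hx, hy]
    | tmul m n => rw [tCoactL_eq, gBL_counit, hM.1, hN.1]
  · intro x
    induction x using TensorProduct.induction_on with
    | zero => simp
    | add x y hx hy => simp only [map_add, hx, hy]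
    | tmul m n =>
      rw [tCoactL_eq, gBL_nat1, hM.2 m, hN.2 n, ← gBL_nat2]

end

section
variable {k : Type*} [CommRing k] {H : Type*} [Ring H] [Bialgebra k H]
variable {M N : Type*} [AddCommGroup M] [Module k M] [AddCommGroup N] [Module k N]
variable {cLM : M →ₗ[k] H ⊗[k] M} {cRM : M →ₗ[k] M ⊗[k] H}
  {cLN : N →ₗ[k] H ⊗[k] N} {cRN : N →ₗ[k] N ⊗[k] H}

lemma gBR_counit (p : M ⊗[k] H) (q : N ⊗[k] H) :
    TensorProduct.rid k (M ⊗[k] N)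
      (TensorProduct.map LinearMap.id (εH k H) (gBR (k := k) M N (p ⊗ₜ q)))
      = TensorProduct.rid k M (TensorProduct.map LinearMap.id (εH k H) p)
          ⊗ₜ TensorProduct.rid k N (TensorProduct.map LinearMap.id (εH k H) q) := by
  induction p using TensorProduct.induction_on with
  | zero => simp
  | add p p' hp hp' => simp [add_tmul, hp, hp']
  | tmul m a =>
    induction q using TensorProduct.induction_on with
    | zero => simp
    | add q q' hq hq' => simp [tmul_add, hq, hq']
    | tmul n b => simp [epsH_mul, smul_tmul, mul_smul, smul_comm (εH k H b) (εH k H a)]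

lemma gBR_coassoc_sub (u v : H ⊗[k] H) (m : M) (n : N) :
    (TensorProduct.assoc k (M ⊗[k] N) H H).symm ((m ⊗ₜ n) ⊗ₜ (u * v))
      = TensorProduct.map (gBR (k := k) M N) LinearMap.id
          (gBR (k := k) (M ⊗[k] H) (N ⊗[k] H)
            (((TensorProduct.assoc k M H H).symm (m ⊗ₜ u))
              ⊗ₜ ((TensorProduct.assoc k N H H).symm (n ⊗ₜ v)))) := by
  induction u using TensorProduct.induction_on with
  | zero => simp
  | add u u' hu hu' => simp [add_mul, tmul_add, add_tmul, hu, hu']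
  | tmul a a' =>
    induction v using TensorProduct.induction_on with
    | zero => simp
    | add v v' hv hv' =>
      simp [mul_add, tmul_add, add_tmul, hv, hv']
    | tmul b b' => simp [Algebra.TensorProduct.tmul_mul_tmul]

lemma gBR_nat1 (p : M ⊗[k] H) (q : N ⊗[k] H) :
    TensorProduct.map (tCoactR k H cRM cRN) LinearMap.id (gBR (k := k) M N (p ⊗ₜ q))
      = TensorProduct.map (gBR (k := k) M N) LinearMap.id
          (gBR (k := k) (M ⊗[k] H) (N ⊗[k] H)
            ((TensorProduct.map cRM LinearMap.id p) ⊗ₜ (TensorProduct.map cRN LinearMap.id q))) := by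
  induction p using TensorProduct.induction_on with
  | zero => simp
  | add p p' hp hp' => simp [add_tmul, hp, hp']
  | tmul m a =>
    induction q using TensorProduct.induction_on with
    | zero => simp
    | add q q' hq hq' => simp [tmul_add, hq, hq']
    | tmul n b => simp [tCoactR_eq]

lemma gBR_nat2 (p : M ⊗[k] H) (q : N ⊗[k] H) :
    (TensorProduct.assoc k (M ⊗[k] N) H H).symm
        (TensorProduct.map LinearMap.id (δH k H) (gBR (k := k) M N (p ⊗ₜ q)))
      = TensorProduct.map (gBR (k := k) M N) LinearMap.id
          (gBR (k := k) (M ⊗[k] H) (N ⊗[k] H)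
            (((TensorProduct.assoc k M H H).symm (TensorProduct.map LinearMap.id (δH k H) p))
              ⊗ₜ ((TensorProduct.assoc k N H H).symm (TensorProduct.map LinearMap.id (δH k H) q)))) := by
  induction p using TensorProduct.induction_on with
  | zero => simp
  | add p p' hp hp' => simp [add_tmul, hp, hp']
  | tmul m a =>
    induction q using TensorProduct.induction_on with
    | zero => simp
    | add q q' hq hq' => simp [tmul_add, hq, hq']
    | tmul n b =>
      have := gBR_coassoc_sub (k := k) (H := H) (δH k H a) (δH k H b) m n
      simpa [deltaH_mul] using this

lemma tensor_rightComodule (hM : IsRightComodule k H cRM) (hN : IsRightComodule k H cRN) :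
    IsRightComodule k H (tCoactR k H cRM cRN) := by
  constructor
  · intro x
    induction x using TensorProduct.induction_on with
    | zero => simp
    | add x y hx hy => simp only [map_add, hx, hy]
    | tmul m n => rw [tCoactR_eq, gBR_counit, hM.1, hN.1]
  · intro x
    induction x using TensorProduct.induction_on with
    | zero => simp
    | add x y hx hy => simp only [map_add, hx, hy]
    | tmul m n =>
      rw [tCoactR_eq, gBR_nat1, hM.2 m, hN.2 n, ← gBR_nat2]

-- bicomodule compatibility helpers
lemma gB_compat_nat1 (p : H ⊗[k] M) (q : H ⊗[k] N) :
    TensorProduct.map LinearMap.id (tCoactR k H cRM cRN) (gBL (k := k) M N (p ⊗ₜ q))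
      = TensorProduct.map LinearMap.id (gBR (k := k) M N)
          (gBL (k := k) (M ⊗[k] H) (N ⊗[k] H)
            ((TensorProduct.map LinearMap.id cRM p) ⊗ₜ (TensorProduct.map LinearMap.id cRN q))) := by
  induction p using TensorProduct.induction_on with
  | zero => simp
  | add p p' hp hp' => simp [add_tmul, hp, hp']
  | tmul a m =>
    induction q using TensorProduct.induction_on with
    | zero => simp
    | add q q' hq hq' => simp [tmul_add, hq, hq']
    | tmul b n => simp [tCoactR_eq]

lemma gB_compat_sub (p : H ⊗[k] M) (q : H ⊗[k] N) (u v : H) :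
    TensorProduct.assoc k H (M ⊗[k] N) H ((gBL (k := k) M N (p ⊗ₜ q)) ⊗ₜ (u * v))
      = TensorProduct.map LinearMap.id (gBR (k := k) M N)
          (gBL (k := k) (M ⊗[k] H) (N ⊗[k] H)
            ((TensorProduct.assoc k H M H (p ⊗ₜ u)) ⊗ₜ (TensorProduct.assoc k H N H (q ⊗ₜ v)))) := by
  induction p using TensorProduct.induction_on with
  | zero => simp
  | add p p' hp hp' => simp [add_tmul, hp, hp']
  | tmul a m =>
    induction q using TensorProduct.induction_on with
    | zero => simp
    | add q q' hq hq' => simp [tmul_add, add_tmul, hq, hq']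
    | tmul b n => simp

lemma gB_compat_nat2 (r : M ⊗[k] H) (s : N ⊗[k] H) :
    TensorProduct.assoc k H (M ⊗[k] N) H
        (TensorProduct.map (tCoactL k H cLM cLN) LinearMap.id (gBR (k := k) M N (r ⊗ₜ s)))
      = TensorProduct.map LinearMap.id (gBR (k := k) M N)
          (gBL (k := k) (M ⊗[k] H) (N ⊗[k] H)
            ((TensorProduct.assoc k H M H (TensorProduct.map cLM LinearMap.id r))
              ⊗ₜ (TensorProduct.assoc k H N H (TensorProduct.map cLN LinearMap.id s)))) := by
  induction r using TensorProduct.induction_on with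
  | zero => simp
  | add r r' hr hr' => simp [add_tmul, hr, hr']
  | tmul m u =>
    induction s using TensorProduct.induction_on with
    | zero => simp
    | add s s' hs hs' => simp [tmul_add, hs, hs']
    | tmul n v =>
      have := gB_compat_sub (k := k) (H := H) (cLM m) (cLN n) u v
      simpa [tCoactL_eq] using this

lemma tensor_bicomodule (hM : IsBicomodule k H cLM cRM) (hN : IsBicomodule k H cLN cRN) :
    IsBicomodule k H (tCoactL k H cLM cLN) (tCoactR k H cRM cRN) := by
  refine ⟨tensor_leftComodule hM.1 hN.1, tensor_rightComodule hM.2.1 hN.2.1, ?_⟩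
  intro x
  induction x using TensorProduct.induction_on with
  | zero => simp
  | add x y hx hy => simp only [map_add, hx, hy]
  | tmul m n =>
    rw [tCoactL_eq, gB_compat_nat1, hM.2.2 m, hN.2.2 n, tCoactR_eq, gB_compat_nat2]
end

section
variable {k : Type*} [CommRing k] {H : Type*} [Ring H] [Bialgebra k H]
variable {M N : Type*} [AddCommGroup M] [Module k M] [AddCommGroup N] [Module k N]
variable {aLM : H ⊗[k] M →ₗ[k] M} {aRM : M ⊗[k] H →ₗ[k] M}
  {cLM : M →ₗ[k] H ⊗[k] M} {cRM : M →ₗ[k] M ⊗[k] H}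
  {aLN : H ⊗[k] N →ₗ[k] N} {aRN : N ⊗[k] H →ₗ[k] N}
  {cLN : N →ₗ[k] H ⊗[k] N} {cRN : N →ₗ[k] N ⊗[k] H}

lemma longLR_sub (a b : H) (p : M ⊗[k] H) (q : N ⊗[k] H) :
    gBR (k := k) M N
        ((TensorProduct.map aLM LinearMap.id ((TensorProduct.assoc k H M H).symm (a ⊗ₜ p)))
          ⊗ₜ (TensorProduct.map aLN LinearMap.id ((TensorProduct.assoc k H N H).symm (b ⊗ₜ q))))
      = TensorProduct.map (gAL aLM aLN) LinearMap.id
          ((TensorProduct.assoc k (H ⊗[k] H) (M ⊗[k] N) H).symm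
            ((a ⊗ₜ b) ⊗ₜ gBR (k := k) M N (p ⊗ₜ q))) := by
  induction p using TensorProduct.induction_on with
  | zero => simp
  | add p p' hp hp' => simp [tmul_add, add_tmul, hp, hp']
  | tmul m u =>
    induction q using TensorProduct.induction_on with
    | zero => simp
    | add q q' hq hq' =>
      simp only [TensorProduct.assoc_symm_tmul, TensorProduct.assoc_tmul, TensorProduct.map_tmul, LinearMap.id_coe, id_eq] at hq hq' ⊢
      simp [tmul_add, hq, hq']
    | tmul n v => simp

lemma longLR_main (hM : CondLongLR k H aLM cRM) (hN : CondLongLR k H aLN cRN)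
    (u : H ⊗[k] H) (x : M ⊗[k] N) :
    tCoactR k H cRM cRN (gAL aLM aLN (u ⊗ₜ x))
      = TensorProduct.map (gAL aLM aLN) LinearMap.id
          ((TensorProduct.assoc k (H ⊗[k] H) (M ⊗[k] N) H).symm
            (u ⊗ₜ tCoactR k H cRM cRN x)) := by
  induction u using TensorProduct.induction_on with
  | zero => simp
  | add u u' hu hu' => simp [add_tmul, hu, hu']
  | tmul a b =>
    induction x using TensorProduct.induction_on with
    | zero => simp
    | add x y hx hy => simp [tmul_add, hx, hy]
    | tmul m n =>
      rw [gAL_tmul, tCoactR_eq, hM a m, hN b n, tCoactR_eq, longLR_sub]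

lemma tensor_longLR (hM : CondLongLR k H aLM cRM) (hN : CondLongLR k H aLN cRN) :
    CondLongLR k H (tActL k H aLM aLN) (tCoactR k H cRM cRN) := by
  intro h x
  rw [tActL_eq, longLR_main hM hN]
  generalize tCoactR k H cRM cRN x = z
  induction z using TensorProduct.induction_on with
  | zero => simp
  | add z z' h1 h2 => simp [tmul_add, h1, h2]
  | tmul y v => simp [tActL_eq]

lemma longRL_sub (a b : H) (p : H ⊗[k] M) (q : H ⊗[k] N) :
    gBL (k := k) M N
        ((TensorProduct.map LinearMap.id aRM (TensorProduct.assoc k H M H (p ⊗ₜ a)))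
          ⊗ₜ (TensorProduct.map LinearMap.id aRN (TensorProduct.assoc k H N H (q ⊗ₜ b))))
      = TensorProduct.map LinearMap.id (gAR aRM aRN)
          (TensorProduct.assoc k H (M ⊗[k] N) (H ⊗[k] H)
            ((gBL (k := k) M N (p ⊗ₜ q)) ⊗ₜ (a ⊗ₜ b))) := by
  induction p using TensorProduct.induction_on with
  | zero => simp
  | add p p' hp hp' => simp [add_tmul, hp, hp']
  | tmul c m =>
    induction q using TensorProduct.induction_on with
    | zero => simp
    | add q q' hq hq' =>
      simp only [TensorProduct.assoc_symm_tmul, TensorProduct.assoc_tmul, TensorProduct.map_tmul, LinearMap.id_coe, id_eq] at hq hq' ⊢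
      simp [tmul_add, add_tmul, hq, hq']
    | tmul d n => simp

lemma longRL_main (hM : CondLongRL k H aRM cLM) (hN : CondLongRL k H aRN cLN)
    (u : H ⊗[k] H) (x : M ⊗[k] N) :
    tCoactL k H cLM cLN (gAR aRM aRN (x ⊗ₜ u))
      = TensorProduct.map LinearMap.id (gAR aRM aRN)
          (TensorProduct.assoc k H (M ⊗[k] N) (H ⊗[k] H)
            ((tCoactL k H cLM cLN x) ⊗ₜ u)) := by
  induction u using TensorProduct.induction_on with
  | zero => simp
  | add u u' hu hu' => simp [tmul_add, hu, hu']
  | tmul a b =>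
    induction x using TensorProduct.induction_on with
    | zero => simp
    | add x y hx hy => simp [add_tmul, tmul_add, hx, hy]
    | tmul m n =>
      rw [gAR_tmul, tCoactL_eq, hM m a, hN n b, tCoactL_eq, longRL_sub]

lemma tensor_longRL (hM : CondLongRL k H aRM cLM) (hN : CondLongRL k H aRN cLN) :
    CondLongRL k H (tActR k H aRM aRN) (tCoactL k H cLM cLN) := by
  intro x h
  rw [tActR_eq, longRL_main hM hN]
  generalize tCoactL k H cLM cLN x = z
  induction z using TensorProduct.induction_on with
  | zero => simp
  | add z z' h1 h2 => simp [add_tmul, h1, h2]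
  | tmul c y => simp [tActR_eq]

end

section
variable {k : Type*} [CommRing k] {H : Type*} [Ring H] [Bialgebra k H]
variable {M N : Type*} [AddCommGroup M] [Module k M] [AddCommGroup N] [Module k N]

/-- `b ⊗ (c ⊗ y) ↦ cb ⊗ y` -/
def mswp (M : Type*) [AddCommGroup M] [Module k M] :
    H ⊗[k] (H ⊗[k] M) →ₗ[k] H ⊗[k] M :=
  TensorProduct.map (μH k H ∘ₗ sw k H H) LinearMap.id ∘ₗ asr k H H M

@[simp] lemma mswp_tmul (b c : H) (m : M) :
    mswp (k := k) M (b ⊗ₜ (c ⊗ₜ m)) = (c * b) ⊗ₜ m := rfl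

/-- `c ⊗ n ↦ n⁽⁻¹⁾ ⊗ c·n⁽⁰⁾` -/
def zetaL (aLN : H ⊗[k] N →ₗ[k] N) (cLN : N →ₗ[k] H ⊗[k] N) :
    H ⊗[k] N →ₗ[k] H ⊗[k] N :=
  TensorProduct.map LinearMap.id aLN ∘ₗ asl k H H N ∘ₗ
    TensorProduct.map (sw k H H) LinearMap.id ∘ₗ asr k H H N ∘ₗ
    TensorProduct.map LinearMap.id cLN

section YDl
variable (aLM : H ⊗[k] M →ₗ[k] M) (cLM : M →ₗ[k] H ⊗[k] M)
  (aLN : H ⊗[k] N →ₗ[k] N) (cLN : N →ₗ[k] H ⊗[k] N)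

lemma ydlL_apply (aL : H ⊗[k] M →ₗ[k] M) (cL : M →ₗ[k] H ⊗[k] M) (a b : H) (m : M) :
    ydlL k H aL cL ((a ⊗ₜ b) ⊗ₜ m) = mswp (k := k) M (b ⊗ₜ cL (aL (a ⊗ₜ m))) := rfl

lemma ydlR_apply (aL : H ⊗[k] M →ₗ[k] M) (cL : M →ₗ[k] H ⊗[k] M) (a b : H) (m : M) :
    ydlR k H aL cL ((a ⊗ₜ b) ⊗ₜ m)
      = TensorProduct.map (μH k H) aL (tt k H H H M ((a ⊗ₜ b) ⊗ₜ cL m)) := rfl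

lemma zetaL_apply (c : H) (n : N) :
    zetaL aLN cLN (c ⊗ₜ n)
      = TensorProduct.map LinearMap.id aLN (asl k H H N
          (TensorProduct.map (sw k H H) LinearMap.id (asr k H H N (c ⊗ₜ cLN n)))) := rfl

/-- Φ1 -/
def PhiL : ((H ⊗[k] H) ⊗[k] H) ⊗[k] (M ⊗[k] N) →ₗ[k] H ⊗[k] (M ⊗[k] N) :=
  mswp (k := k) (M ⊗[k] N)
    ∘ₗ TensorProduct.map LinearMap.id (tCoactL k H cLM cLN ∘ₗ gAL aLM aLN)
    ∘ₗ asl k H (H ⊗[k] H) (M ⊗[k] N)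
    ∘ₗ TensorProduct.map (sw k (H ⊗[k] H) H) LinearMap.id

lemma PhiL_apply (u : H ⊗[k] H) (c : H) (x : M ⊗[k] N) :
    PhiL aLM cLM aLN cLN ((u ⊗ₜ c) ⊗ₜ x)
      = mswp (k := k) (M ⊗[k] N) (c ⊗ₜ tCoactL k H cLM cLN (gAL aLM aLN (u ⊗ₜ x))) := rfl

def XiL0 : (H ⊗[k] H) ⊗[k] (M ⊗[k] N) →ₗ[k] H ⊗[k] (M ⊗[k] N) :=
  gBL (k := k) M N
    ∘ₗ TensorProduct.map (cLM ∘ₗ aLM)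
        (ydlL k H aLN cLN ∘ₗ TensorProduct.map (δH k H) LinearMap.id)
    ∘ₗ tt k H H M N

def XiL1 : (H ⊗[k] H) ⊗[k] (M ⊗[k] N) →ₗ[k] H ⊗[k] (M ⊗[k] N) :=
  gBL (k := k) M N
    ∘ₗ TensorProduct.map (cLM ∘ₗ aLM)
        (ydlR k H aLN cLN ∘ₗ TensorProduct.map (δH k H) LinearMap.id)
    ∘ₗ tt k H H M N

def ThetaL0 : ((H ⊗[k] H) ⊗[k] H) ⊗[k] (M ⊗[k] N) →ₗ[k] H ⊗[k] (M ⊗[k] N) :=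
  gBL (k := k) M N
    ∘ₗ TensorProduct.map (ydlL k H aLM cLM) (zetaL aLN cLN)
    ∘ₗ tt k (H ⊗[k] H) H M N

def ThetaL1 : ((H ⊗[k] H) ⊗[k] H) ⊗[k] (M ⊗[k] N) →ₗ[k] H ⊗[k] (M ⊗[k] N) :=
  gBL (k := k) M N
    ∘ₗ TensorProduct.map (ydlR k H aLM cLM) (zetaL aLN cLN)
    ∘ₗ tt k (H ⊗[k] H) H M N

def LamL : (H ⊗[k] (H ⊗[k] H)) ⊗[k] (M ⊗[k] N) →ₗ[k] H ⊗[k] (M ⊗[k] N) :=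
  TensorProduct.map (μH k H) (gAL aLM aLN)
    ∘ₗ tt k H (H ⊗[k] H) H (M ⊗[k] N)
    ∘ₗ TensorProduct.map LinearMap.id (tCoactL k H cLM cLN)

-- Step 1
lemma stepL1 (v : H ⊗[k] H) (x : M ⊗[k] N) :
    ydlL k H (tActL k H aLM aLN) (tCoactL k H cLM cLN) (v ⊗ₜ x)
      = PhiL aLM cLM aLN cLN ((TensorProduct.map (δH k H) LinearMap.id v) ⊗ₜ x) := by
  induction v using TensorProduct.induction_on with
  | zero => simp
  | add v v' hv hv' => simp only [map_add, add_tmul, hv, hv']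
  | tmul a b => rfl

-- Step 2 inner
lemma stepL2sub (a : H) (v : H ⊗[k] H) (m : M) (n : N) :
    PhiL aLM cLM aLN cLN
        (((TensorProduct.assoc k H H H).symm (a ⊗ₜ v)) ⊗ₜ (m ⊗ₜ n))
      = gBL (k := k) M N (cLM (aLM (a ⊗ₜ m)) ⊗ₜ ydlL k H aLN cLN (v ⊗ₜ n)) := by
  induction v using TensorProduct.induction_on with
  | zero => simp
  | add v v' hv hv' => simp only [map_add, tmul_add, add_tmul, hv, hv']
  | tmul b c =>
    rw [TensorProduct.assoc_symm_tmul, PhiL_apply, gAL_tmul, tCoactL_eq, ydlL_apply]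
    generalize cLM (aLM (a ⊗ₜ m)) = p
    generalize cLN (aLN (b ⊗ₜ n)) = q
    induction p using TensorProduct.induction_on with
    | zero => simp
    | add p p' hp hp' => simp only [map_add, tmul_add, add_tmul, hp, hp']
    | tmul d m' =>
      induction q using TensorProduct.induction_on with
      | zero => simp
      | add q q' hq hq' => simp only [map_add, tmul_add, add_tmul, hq, hq']
      | tmul e n' => simp [mul_assoc]

lemma stepL2 (u : H ⊗[k] H) (x : M ⊗[k] N) :
    PhiL aLM cLM aLN cLN
        (((TensorProduct.assoc k H H H).symm
            (TensorProduct.map LinearMap.id (δH k H) u)) ⊗ₜ x)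
      = XiL0 aLM cLM aLN cLN (u ⊗ₜ x) := by
  induction u using TensorProduct.induction_on with
  | zero => simp
  | add u u' hu hu' => simp only [map_add, add_tmul, hu, hu']
  | tmul a b =>
    induction x using TensorProduct.induction_on with
    | zero => simp
    | add x y hx hy => simp only [map_add, tmul_add, hx, hy]
    | tmul m n =>
      rw [TensorProduct.map_tmul, stepL2sub]
      rfl

lemma stepL3 (hN : CondYDl k H aLN cLN) (u : H ⊗[k] H) (x : M ⊗[k] N) :
    XiL0 aLM cLM aLN cLN (u ⊗ₜ x) = XiL1 aLM cLM aLN cLN (u ⊗ₜ x) := by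
  induction u using TensorProduct.induction_on with
  | zero => simp
  | add u u' hu hu' => simp only [map_add, add_tmul, hu, hu']
  | tmul a b =>
    induction x using TensorProduct.induction_on with
    | zero => simp
    | add x y hx hy => simp only [map_add, tmul_add, hx, hy]
    | tmul m n =>
      show gBL (k := k) M N (cLM (aLM (a ⊗ₜ m)) ⊗ₜ ydlL k H aLN cLN (δH k H b ⊗ₜ n))
        = gBL (k := k) M N (cLM (aLM (a ⊗ₜ m)) ⊗ₜ ydlR k H aLN cLN (δH k H b ⊗ₜ n))
      rw [hN b n]

lemma stepL4sub (a : H) (v : H ⊗[k] H) (m : M) (n : N) :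
    ThetaL0 aLM cLM aLN cLN
        (((TensorProduct.assoc k H H H).symm (a ⊗ₜ v)) ⊗ₜ (m ⊗ₜ n))
      = gBL (k := k) M N (cLM (aLM (a ⊗ₜ m)) ⊗ₜ ydlR k H aLN cLN (v ⊗ₜ n)) := by
  induction v using TensorProduct.induction_on with
  | zero => simp
  | add v v' hv hv' => simp only [map_add, tmul_add, add_tmul, hv, hv']
  | tmul b c =>
    rw [TensorProduct.assoc_symm_tmul, ydlR_apply]
    show gBL (k := k) M N
        (ydlL k H aLM cLM ((a ⊗ₜ b) ⊗ₜ m) ⊗ₜ zetaL aLN cLN (c ⊗ₜ n)) = _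
    rw [ydlL_apply, zetaL_apply]
    generalize cLM (aLM (a ⊗ₜ m)) = p
    generalize cLN n = q
    induction p using TensorProduct.induction_on with
    | zero => simp
    | add p p' hp hp' => simp only [map_add, tmul_add, add_tmul, hp, hp']
    | tmul d m' =>
      induction q using TensorProduct.induction_on with
      | zero => simp
      | add q q' hq hq' => simp only [map_add, tmul_add, add_tmul, hq, hq']
      | tmul e n' => simp [mul_assoc]

lemma stepL4 (u : H ⊗[k] H) (x : M ⊗[k] N) :
    XiL1 aLM cLM aLN cLN (u ⊗ₜ x)
      = ThetaL0 aLM cLM aLN cLN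
          (((TensorProduct.assoc k H H H).symm
              (TensorProduct.map LinearMap.id (δH k H) u)) ⊗ₜ x) := by
  induction u using TensorProduct.induction_on with
  | zero => simp
  | add u u' hu hu' => simp only [map_add, add_tmul, hu, hu']
  | tmul a b =>
    induction x using TensorProduct.induction_on with
    | zero => simp
    | add x y hx hy => simp only [map_add, tmul_add, hx, hy]
    | tmul m n =>
      rw [TensorProduct.map_tmul, stepL4sub]
      rfl

lemma stepL5 (hM : CondYDl k H aLM cLM) (u : H ⊗[k] H) (x : M ⊗[k] N) :
    ThetaL0 aLM cLM aLN cLN ((TensorProduct.map (δH k H) LinearMap.id u) ⊗ₜ x)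
      = ThetaL1 aLM cLM aLN cLN ((TensorProduct.map (δH k H) LinearMap.id u) ⊗ₜ x) := by
  induction u using TensorProduct.induction_on with
  | zero => simp
  | add u u' hu hu' => simp only [map_add, add_tmul, hu, hu']
  | tmul a c =>
    induction x using TensorProduct.induction_on with
    | zero => simp
    | add x y hx hy => simp only [map_add, tmul_add, hx, hy]
    | tmul m n =>
      show gBL (k := k) M N (ydlL k H aLM cLM (δH k H a ⊗ₜ m) ⊗ₜ zetaL aLN cLN (c ⊗ₜ n))
        = gBL (k := k) M N (ydlR k H aLM cLM (δH k H a ⊗ₜ m) ⊗ₜ zetaL aLN cLN (c ⊗ₜ n))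
      rw [hM a m]

lemma stepL6 (W : (H ⊗[k] H) ⊗[k] H) (x : M ⊗[k] N) :
    LamL aLM cLM aLN cLN ((TensorProduct.assoc k H H H W) ⊗ₜ x)
      = ThetaL1 aLM cLM aLN cLN (W ⊗ₜ x) := by
  induction W using TensorProduct.induction_on with
  | zero => simp
  | add W W' hW hW' => simp only [map_add, add_tmul, hW, hW']
  | tmul V c =>
    induction V using TensorProduct.induction_on with
    | zero => simp
    | add V V' hV hV' => simp only [map_add, add_tmul, hV, hV']
    | tmul a b =>
      induction x using TensorProduct.induction_on with
      | zero => simp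
      | add x y hx hy => simp only [map_add, tmul_add, hx, hy]
      | tmul m n =>
        rw [TensorProduct.assoc_tmul]
        show TensorProduct.map (μH k H) (gAL aLM aLN)
            (tt k H (H ⊗[k] H) H (M ⊗[k] N)
              ((a ⊗ₜ (b ⊗ₜ c)) ⊗ₜ tCoactL k H cLM cLN (m ⊗ₜ n)))
          = gBL (k := k) M N
              (ydlR k H aLM cLM ((a ⊗ₜ b) ⊗ₜ m) ⊗ₜ zetaL aLN cLN (c ⊗ₜ n))
        rw [tCoactL_eq, ydlR_apply, zetaL_apply]
        generalize cLM m = p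
        generalize cLN n = q
        induction p using TensorProduct.induction_on with
        | zero => simp
        | add p p' hp hp' => simp only [map_add, tmul_add, add_tmul, hp, hp']
        | tmul d m' =>
          induction q using TensorProduct.induction_on with
          | zero => simp
          | add q q' hq hq' => simp only [map_add, tmul_add, add_tmul, hq, hq']
          | tmul e n' => simp [mul_assoc]

lemma stepL7 (u : H ⊗[k] H) (x : M ⊗[k] N) :
    ydlR k H (tActL k H aLM aLN) (tCoactL k H cLM cLN) (u ⊗ₜ x)
      = LamL aLM cLM aLN cLN ((TensorProduct.map LinearMap.id (δH k H) u) ⊗ₜ x) := by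
  induction u using TensorProduct.induction_on with
  | zero => simp
  | add u u' hu hu' => simp only [map_add, add_tmul, hu, hu']
  | tmul a c =>
    show TensorProduct.map (μH k H) (tActL k H aLM aLN)
        (tt k H H H (M ⊗[k] N) ((a ⊗ₜ c) ⊗ₜ tCoactL k H cLM cLN x))
      = TensorProduct.map (μH k H) (gAL aLM aLN)
          (tt k H (H ⊗[k] H) H (M ⊗[k] N)
            ((a ⊗ₜ δH k H c) ⊗ₜ tCoactL k H cLM cLN x))
    generalize tCoactL k H cLM cLN x = y
    induction y using TensorProduct.induction_on with
    | zero => simp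
    | add y y' hy hy' => simp only [map_add, tmul_add, hy, hy']
    | tmul d x0 => rfl

lemma deltaH_coassoc (h : H) :
    TensorProduct.assoc k H H H
        (TensorProduct.map (δH k H) LinearMap.id (δH k H h))
      = TensorProduct.map LinearMap.id (δH k H) (δH k H h) := by
  simpa [δH, LinearMap.rTensor, LinearMap.lTensor] using Coalgebra.coassoc_apply (R := k) h

lemma deltaH_coassoc_symm (h : H) :
    (TensorProduct.assoc k H H H).symm
        (TensorProduct.map LinearMap.id (δH k H) (δH k H h))
      = TensorProduct.map (δH k H) LinearMap.id (δH k H h) := by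
  rw [← deltaH_coassoc, LinearEquiv.symm_apply_apply]

lemma tensor_YDl (hM : CondYDl k H aLM cLM) (hN : CondYDl k H aLN cLN) :
    CondYDl k H (tActL k H aLM aLN) (tCoactL k H cLM cLN) := by
  intro h x
  calc ydlL k H (tActL k H aLM aLN) (tCoactL k H cLM cLN) (δH k H h ⊗ₜ x)
      = PhiL aLM cLM aLN cLN ((TensorProduct.map (δH k H) LinearMap.id (δH k H h)) ⊗ₜ x) :=
        stepL1 _ _ _ _ _ _
    _ = PhiL aLM cLM aLN cLN
          (((TensorProduct.assoc k H H H).symm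
              (TensorProduct.map LinearMap.id (δH k H) (δH k H h))) ⊗ₜ x) := by
        rw [deltaH_coassoc_symm]
    _ = XiL0 aLM cLM aLN cLN (δH k H h ⊗ₜ x) := stepL2 _ _ _ _ _ _
    _ = XiL1 aLM cLM aLN cLN (δH k H h ⊗ₜ x) := stepL3 _ _ _ _ hN _ _
    _ = ThetaL0 aLM cLM aLN cLN
          (((TensorProduct.assoc k H H H).symm
              (TensorProduct.map LinearMap.id (δH k H) (δH k H h))) ⊗ₜ x) :=
        stepL4 _ _ _ _ _ _
    _ = ThetaL0 aLM cLM aLN cLN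
          ((TensorProduct.map (δH k H) LinearMap.id (δH k H h)) ⊗ₜ x) := by
        rw [deltaH_coassoc_symm]
    _ = ThetaL1 aLM cLM aLN cLN
          ((TensorProduct.map (δH k H) LinearMap.id (δH k H h)) ⊗ₜ x) :=
        stepL5 _ _ _ _ hM _ _
    _ = LamL aLM cLM aLN cLN
          ((TensorProduct.assoc k H H H
              (TensorProduct.map (δH k H) LinearMap.id (δH k H h))) ⊗ₜ x) :=
        (stepL6 _ _ _ _ _ _).symm
    _ = LamL aLM cLM aLN cLN
          ((TensorProduct.map LinearMap.id (δH k H) (δH k H h)) ⊗ₜ x) := by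
        rw [deltaH_coassoc]
    _ = ydlR k H (tActL k H aLM aLN) (tCoactL k H cLM cLN) (δH k H h ⊗ₜ x) :=
        (stepL7 _ _ _ _ _ _).symm

end YDl
end

section
variable {k : Type*} [CommRing k] {H : Type*} [Ring H] [Bialgebra k H]
variable {M N : Type*} [AddCommGroup M] [Module k M] [AddCommGroup N] [Module k N]

/-- `(y ⊗ c) ⊗ a ↦ y ⊗ ac` -/
def mswpR (M : Type*) [AddCommGroup M] [Module k M] :
    (M ⊗[k] H) ⊗[k] H →ₗ[k] M ⊗[k] H :=
  TensorProduct.map LinearMap.id (μH k H ∘ₗ sw k H H) ∘ₗ asl k M H H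

@[simp] lemma mswpR_tmul (a c : H) (m : M) :
    mswpR (k := k) M ((m ⊗ₜ c) ⊗ₜ a) = m ⊗ₜ (a * c) := rfl

/-- `m ⊗ c ↦ m⁽⁰⁾·c ⊗ m⁽¹⁾` -/
def zetaR (aRM : M ⊗[k] H →ₗ[k] M) (cRM : M →ₗ[k] M ⊗[k] H) :
    M ⊗[k] H →ₗ[k] M ⊗[k] H :=
  TensorProduct.map aRM LinearMap.id ∘ₗ asr k M H H ∘ₗ
    TensorProduct.map LinearMap.id (sw k H H) ∘ₗ asl k M H H ∘ₗ
    TensorProduct.map cRM LinearMap.id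

section YDr
variable (aRM : M ⊗[k] H →ₗ[k] M) (cRM : M →ₗ[k] M ⊗[k] H)
  (aRN : N ⊗[k] H →ₗ[k] N) (cRN : N →ₗ[k] N ⊗[k] H)

lemma ydrL_apply (aR : M ⊗[k] H →ₗ[k] M) (cR : M →ₗ[k] M ⊗[k] H) (a b : H) (m : M) :
    ydrL k H aR cR (m ⊗ₜ (a ⊗ₜ b)) = mswpR (k := k) M (cR (aR (m ⊗ₜ b)) ⊗ₜ a) := rfl

lemma ydrR_apply (aR : M ⊗[k] H →ₗ[k] M) (cR : M →ₗ[k] M ⊗[k] H) (a b : H) (m : M) :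
    ydrR k H aR cR (m ⊗ₜ (a ⊗ₜ b))
      = TensorProduct.map aR (μH k H) (tt k M H H H (cR m ⊗ₜ (a ⊗ₜ b))) := rfl

lemma zetaR_apply (a : H) (m : M) :
    zetaR aRM cRM (m ⊗ₜ a)
      = TensorProduct.map aRM LinearMap.id (asr k M H H
          (TensorProduct.map LinearMap.id (sw k H H) (asl k M H H (cRM m ⊗ₜ a)))) := rfl

def PhiR : (M ⊗[k] N) ⊗[k] (H ⊗[k] (H ⊗[k] H)) →ₗ[k] (M ⊗[k] N) ⊗[k] H :=
  mswpR (k := k) (M ⊗[k] N)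
    ∘ₗ TensorProduct.map (tCoactR k H cRM cRN ∘ₗ gAR aRM aRN) LinearMap.id
    ∘ₗ asr k (M ⊗[k] N) (H ⊗[k] H) H
    ∘ₗ TensorProduct.map LinearMap.id (sw k H (H ⊗[k] H))

lemma PhiR_apply (a : H) (V : H ⊗[k] H) (x : M ⊗[k] N) :
    PhiR aRM cRM aRN cRN (x ⊗ₜ (a ⊗ₜ V))
      = mswpR (k := k) (M ⊗[k] N) (tCoactR k H cRM cRN (gAR aRM aRN (x ⊗ₜ V)) ⊗ₜ a) := rfl

def XiR0 : (M ⊗[k] N) ⊗[k] (H ⊗[k] H) →ₗ[k] (M ⊗[k] N) ⊗[k] H :=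
  gBR (k := k) M N
    ∘ₗ TensorProduct.map
        (ydrL k H aRM cRM ∘ₗ TensorProduct.map LinearMap.id (δH k H))
        (cRN ∘ₗ aRN)
    ∘ₗ tt k M N H H

def XiR1 : (M ⊗[k] N) ⊗[k] (H ⊗[k] H) →ₗ[k] (M ⊗[k] N) ⊗[k] H :=
  gBR (k := k) M N
    ∘ₗ TensorProduct.map
        (ydrR k H aRM cRM ∘ₗ TensorProduct.map LinearMap.id (δH k H))
        (cRN ∘ₗ aRN)
    ∘ₗ tt k M N H H

def ThetaR0 : (M ⊗[k] N) ⊗[k] (H ⊗[k] (H ⊗[k] H)) →ₗ[k] (M ⊗[k] N) ⊗[k] H :=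
  gBR (k := k) M N
    ∘ₗ TensorProduct.map (zetaR aRM cRM) (ydrL k H aRN cRN)
    ∘ₗ tt k M N H (H ⊗[k] H)

def ThetaR1 : (M ⊗[k] N) ⊗[k] (H ⊗[k] (H ⊗[k] H)) →ₗ[k] (M ⊗[k] N) ⊗[k] H :=
  gBR (k := k) M N
    ∘ₗ TensorProduct.map (zetaR aRM cRM) (ydrR k H aRN cRN)
    ∘ₗ tt k M N H (H ⊗[k] H)

def LamR : (M ⊗[k] N) ⊗[k] ((H ⊗[k] H) ⊗[k] H) →ₗ[k] (M ⊗[k] N) ⊗[k] H :=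
  TensorProduct.map (gAR aRM aRN) (μH k H)
    ∘ₗ tt k (M ⊗[k] N) H (H ⊗[k] H) H
    ∘ₗ TensorProduct.map (tCoactR k H cRM cRN) LinearMap.id

lemma stepR1 (v : H ⊗[k] H) (x : M ⊗[k] N) :
    ydrL k H (tActR k H aRM aRN) (tCoactR k H cRM cRN) (x ⊗ₜ v)
      = PhiR aRM cRM aRN cRN (x ⊗ₜ (TensorProduct.map LinearMap.id (δH k H) v)) := by
  induction v using TensorProduct.induction_on with
  | zero => simp
  | add v v' hv hv' => simp only [map_add, tmul_add, hv, hv']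
  | tmul a b => rfl

lemma stepR2sub (v : H ⊗[k] H) (c : H) (m : M) (n : N) :
    PhiR aRM cRM aRN cRN
        ((m ⊗ₜ n) ⊗ₜ (TensorProduct.assoc k H H H (v ⊗ₜ c)))
      = gBR (k := k) M N (ydrL k H aRM cRM (m ⊗ₜ v) ⊗ₜ cRN (aRN (n ⊗ₜ c))) := by
  induction v using TensorProduct.induction_on with
  | zero => simp
  | add v v' hv hv' => simp only [map_add, tmul_add, add_tmul, hv, hv']
  | tmul a b =>
    rw [TensorProduct.assoc_tmul, PhiR_apply, gAR_tmul, tCoactR_eq, ydrL_apply]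
    generalize cRM (aRM (m ⊗ₜ b)) = p
    generalize cRN (aRN (n ⊗ₜ c)) = q
    induction p using TensorProduct.induction_on with
    | zero => simp
    | add p p' hp hp' => simp only [map_add, tmul_add, add_tmul, hp, hp']
    | tmul m' u =>
      induction q using TensorProduct.induction_on with
      | zero => simp
      | add q q' hq hq' => simp only [map_add, tmul_add, add_tmul, hq, hq']
      | tmul n' w => simp [mul_assoc]

lemma stepR2 (u : H ⊗[k] H) (x : M ⊗[k] N) :
    PhiR aRM cRM aRN cRN
        (x ⊗ₜ (TensorProduct.assoc k H H H
            (TensorProduct.map (δH k H) LinearMap.id u)))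
      = XiR0 aRM cRM aRN cRN (x ⊗ₜ u) := by
  induction u using TensorProduct.induction_on with
  | zero => simp
  | add u u' hu hu' => simp only [map_add, tmul_add, hu, hu']
  | tmul a c =>
    induction x using TensorProduct.induction_on with
    | zero => simp
    | add x y hx hy => simp only [map_add, add_tmul, hx, hy]
    | tmul m n =>
      rw [TensorProduct.map_tmul, stepR2sub]
      rfl

lemma stepR3 (hM : CondYDr k H aRM cRM) (u : H ⊗[k] H) (x : M ⊗[k] N) :
    XiR0 aRM cRM aRN cRN (x ⊗ₜ u) = XiR1 aRM cRM aRN cRN (x ⊗ₜ u) := by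
  induction u using TensorProduct.induction_on with
  | zero => simp
  | add u u' hu hu' => simp only [map_add, tmul_add, hu, hu']
  | tmul a c =>
    induction x using TensorProduct.induction_on with
    | zero => simp
    | add x y hx hy => simp only [map_add, add_tmul, hx, hy]
    | tmul m n =>
      show gBR (k := k) M N (ydrL k H aRM cRM (m ⊗ₜ δH k H a) ⊗ₜ cRN (aRN (n ⊗ₜ c)))
        = gBR (k := k) M N (ydrR k H aRM cRM (m ⊗ₜ δH k H a) ⊗ₜ cRN (aRN (n ⊗ₜ c)))
      rw [hM a m]

lemma stepR4sub (v : H ⊗[k] H) (c : H) (m : M) (n : N) :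
    ThetaR0 aRM cRM aRN cRN
        ((m ⊗ₜ n) ⊗ₜ (TensorProduct.assoc k H H H (v ⊗ₜ c)))
      = gBR (k := k) M N (ydrR k H aRM cRM (m ⊗ₜ v) ⊗ₜ cRN (aRN (n ⊗ₜ c))) := by
  induction v using TensorProduct.induction_on with
  | zero => simp
  | add v v' hv hv' => simp only [map_add, tmul_add, add_tmul, hv, hv']
  | tmul a b =>
    rw [TensorProduct.assoc_tmul, ydrR_apply]
    show gBR (k := k) M N
        (zetaR aRM cRM (m ⊗ₜ a) ⊗ₜ ydrL k H aRN cRN (n ⊗ₜ (b ⊗ₜ c))) = _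
    rw [ydrL_apply, zetaR_apply]
    generalize cRM m = p
    generalize cRN (aRN (n ⊗ₜ c)) = q
    induction p using TensorProduct.induction_on with
    | zero => simp
    | add p p' hp hp' => simp only [map_add, tmul_add, add_tmul, hp, hp']
    | tmul m' u =>
      induction q using TensorProduct.induction_on with
      | zero => simp
      | add q q' hq hq' => simp only [map_add, tmul_add, add_tmul, hq, hq']
      | tmul n' w => simp [mul_assoc]

lemma stepR4 (u : H ⊗[k] H) (x : M ⊗[k] N) :
    XiR1 aRM cRM aRN cRN (x ⊗ₜ u)
      = ThetaR0 aRM cRM aRN cRN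
          (x ⊗ₜ (TensorProduct.assoc k H H H
              (TensorProduct.map (δH k H) LinearMap.id u))) := by
  induction u using TensorProduct.induction_on with
  | zero => simp
  | add u u' hu hu' => simp only [map_add, tmul_add, hu, hu']
  | tmul a c =>
    induction x using TensorProduct.induction_on with
    | zero => simp
    | add x y hx hy => simp only [map_add, add_tmul, hx, hy]
    | tmul m n =>
      rw [TensorProduct.map_tmul, stepR4sub]
      rfl

lemma stepR5 (hN : CondYDr k H aRN cRN) (u : H ⊗[k] H) (x : M ⊗[k] N) :
    ThetaR0 aRM cRM aRN cRN (x ⊗ₜ (TensorProduct.map LinearMap.id (δH k H) u))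
      = ThetaR1 aRM cRM aRN cRN (x ⊗ₜ (TensorProduct.map LinearMap.id (δH k H) u)) := by
  induction u using TensorProduct.induction_on with
  | zero => simp
  | add u u' hu hu' => simp only [map_add, tmul_add, hu, hu']
  | tmul a c =>
    induction x using TensorProduct.induction_on with
    | zero => simp
    | add x y hx hy => simp only [map_add, add_tmul, hx, hy]
    | tmul m n =>
      show gBR (k := k) M N (zetaR aRM cRM (m ⊗ₜ a) ⊗ₜ ydrL k H aRN cRN (n ⊗ₜ δH k H c))
        = gBR (k := k) M N (zetaR aRM cRM (m ⊗ₜ a) ⊗ₜ ydrR k H aRN cRN (n ⊗ₜ δH k H c))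
      rw [hN c n]

lemma stepR6 (W : (H ⊗[k] H) ⊗[k] H) (x : M ⊗[k] N) :
    LamR aRM cRM aRN cRN (x ⊗ₜ W)
      = ThetaR1 aRM cRM aRN cRN (x ⊗ₜ (TensorProduct.assoc k H H H W)) := by
  induction W using TensorProduct.induction_on with
  | zero => simp
  | add W W' hW hW' => simp only [map_add, tmul_add, hW, hW']
  | tmul V c =>
    induction V using TensorProduct.induction_on with
    | zero => simp
    | add V V' hV hV' => simp only [map_add, add_tmul, tmul_add, hV, hV']
    | tmul a b =>
      induction x using TensorProduct.induction_on with
      | zero => simp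
      | add x y hx hy => simp only [map_add, add_tmul, hx, hy]
      | tmul m n =>
        rw [TensorProduct.assoc_tmul]
        show TensorProduct.map (gAR aRM aRN) (μH k H)
            (tt k (M ⊗[k] N) H (H ⊗[k] H) H
              (tCoactR k H cRM cRN (m ⊗ₜ n) ⊗ₜ ((a ⊗ₜ b) ⊗ₜ c)))
          = gBR (k := k) M N
              (zetaR aRM cRM (m ⊗ₜ a) ⊗ₜ ydrR k H aRN cRN (n ⊗ₜ (b ⊗ₜ c)))
        rw [tCoactR_eq, ydrR_apply, zetaR_apply]
        generalize cRM m = p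
        generalize cRN n = q
        induction p using TensorProduct.induction_on with
        | zero => simp
        | add p p' hp hp' => simp only [map_add, tmul_add, add_tmul, hp, hp']
        | tmul m' u =>
          induction q using TensorProduct.induction_on with
          | zero => simp
          | add q q' hq hq' => simp only [map_add, tmul_add, add_tmul, hq, hq']
          | tmul n' w => simp [mul_assoc]

lemma stepR7 (u : H ⊗[k] H) (x : M ⊗[k] N) :
    ydrR k H (tActR k H aRM aRN) (tCoactR k H cRM cRN) (x ⊗ₜ u)
      = LamR aRM cRM aRN cRN (x ⊗ₜ (TensorProduct.map (δH k H) LinearMap.id u)) := by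
  induction u using TensorProduct.induction_on with
  | zero => simp
  | add u u' hu hu' => simp only [map_add, tmul_add, hu, hu']
  | tmul a c =>
    show TensorProduct.map (tActR k H aRM aRN) (μH k H)
        (tt k (M ⊗[k] N) H H H (tCoactR k H cRM cRN x ⊗ₜ (a ⊗ₜ c)))
      = TensorProduct.map (gAR aRM aRN) (μH k H)
          (tt k (M ⊗[k] N) H (H ⊗[k] H) H
            (tCoactR k H cRM cRN x ⊗ₜ (δH k H a ⊗ₜ c)))
    generalize tCoactR k H cRM cRN x = y
    induction y using TensorProduct.induction_on with
    | zero => simp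
    | add y y' hy hy' => simp only [map_add, add_tmul, hy, hy']
    | tmul x0 d => rfl

lemma deltaH_coassoc' (h : H) :
    TensorProduct.assoc k H H H
        (TensorProduct.map (δH k H) LinearMap.id (δH k H h))
      = TensorProduct.map LinearMap.id (δH k H) (δH k H h) := by
  simpa [δH, LinearMap.rTensor, LinearMap.lTensor] using Coalgebra.coassoc_apply (R := k) h

lemma tensor_YDr (hM : CondYDr k H aRM cRM) (hN : CondYDr k H aRN cRN) :
    CondYDr k H (tActR k H aRM aRN) (tCoactR k H cRM cRN) := by
  intro h x
  calc ydrL k H (tActR k H aRM aRN) (tCoactR k H cRM cRN) (x ⊗ₜ δH k H h)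
      = PhiR aRM cRM aRN cRN (x ⊗ₜ (TensorProduct.map LinearMap.id (δH k H) (δH k H h))) :=
        stepR1 _ _ _ _ _ _
    _ = PhiR aRM cRM aRN cRN
          (x ⊗ₜ (TensorProduct.assoc k H H H
              (TensorProduct.map (δH k H) LinearMap.id (δH k H h)))) := by
        rw [deltaH_coassoc']
    _ = XiR0 aRM cRM aRN cRN (x ⊗ₜ δH k H h) := stepR2 _ _ _ _ _ _
    _ = XiR1 aRM cRM aRN cRN (x ⊗ₜ δH k H h) := stepR3 _ _ _ _ hM _ _
    _ = ThetaR0 aRM cRM aRN cRN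
          (x ⊗ₜ (TensorProduct.assoc k H H H
              (TensorProduct.map (δH k H) LinearMap.id (δH k H h)))) :=
        stepR4 _ _ _ _ _ _
    _ = ThetaR0 aRM cRM aRN cRN
          (x ⊗ₜ (TensorProduct.map LinearMap.id (δH k H) (δH k H h))) := by
        rw [deltaH_coassoc']
    _ = ThetaR1 aRM cRM aRN cRN
          (x ⊗ₜ (TensorProduct.map LinearMap.id (δH k H) (δH k H h))) :=
        stepR5 _ _ _ _ hN _ _
    _ = ThetaR1 aRM cRM aRN cRN
          (x ⊗ₜ (TensorProduct.assoc k H H H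
              (TensorProduct.map (δH k H) LinearMap.id (δH k H h)))) := by
        rw [deltaH_coassoc']
    _ = LamR aRM cRM aRN cRN
          (x ⊗ₜ (TensorProduct.map (δH k H) LinearMap.id (δH k H h))) :=
        (stepR6 _ _ _ _ _ _).symm
    _ = ydrR k H (tActR k H aRM aRN) (tCoactR k H cRM cRN) (x ⊗ₜ δH k H h) :=
        (stepR7 _ _ _ _ _ _).symm

end YDr
end

section
variable {k : Type*} [CommRing k] {H : Type*} [Ring H] [Bialgebra k H]

@[simp] lemma trivActL_tmul (h : H) (x : k) :
    trivActL (D := k) k H (h ⊗ₜ x) = εH k H h • x := rfl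
@[simp] lemma trivActR_tmul (h : H) (x : k) :
    trivActR (D := k) k H (x ⊗ₜ h) = εH k H h • x := by
  simp [trivActR, εH, mul_comm]
@[simp] lemma trivCoactL_apply (x : k) :
    trivCoactL (D := k) k H x = (1 : H) ⊗ₜ x := by
  simp [trivCoactL, Algebra.linearMap, TensorProduct.smul_tmul]
@[simp] lemma trivCoactR_apply (x : k) :
    trivCoactR (D := k) k H x = x ⊗ₜ (1 : H) := by
  simp [trivCoactR, Algebra.linearMap, TensorProduct.smul_tmul']

lemma deltaH_counit_left (h : H) :
    TensorProduct.lid k H (TensorProduct.map (εH k H) LinearMap.id (δH k H h)) = h := by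
  have := Coalgebra.rTensor_counit_comul (R := k) h
  simp only [LinearMap.rTensor, εH, δH] at this ⊢
  rw [this]; simp

lemma deltaH_counit_right (h : H) :
    TensorProduct.rid k H (TensorProduct.map LinearMap.id (εH k H) (δH k H h)) = h := by
  have := Coalgebra.lTensor_counit_comul (R := k) h
  simp only [LinearMap.lTensor, εH, δH] at this ⊢
  rw [this]; simp

lemma triv_ydlL (u : H ⊗[k] H) (x : k) :
    ydlL k H (trivActL (D := k) k H) (trivCoactL (D := k) k H) (u ⊗ₜ x)
      = (TensorProduct.lid k H (TensorProduct.map (εH k H) LinearMap.id u)) ⊗ₜ x := by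
  induction u using TensorProduct.induction_on with
  | zero => simp
  | add u u' hu hu' => simp only [map_add, add_tmul, hu, hu']
  | tmul a b =>
    show TensorProduct.map (μH k H ∘ₗ sw k H H) LinearMap.id
        (asr k H H k (b ⊗ₜ (trivCoactL (D := k) k H (trivActL (D := k) k H (a ⊗ₜ x))))) = _
    simp [TensorProduct.smul_tmul, TensorProduct.smul_tmul']

lemma triv_ydlR (u : H ⊗[k] H) (x : k) :
    ydlR k H (trivActL (D := k) k H) (trivCoactL (D := k) k H) (u ⊗ₜ x)
      = (TensorProduct.rid k H (TensorProduct.map LinearMap.id (εH k H) u)) ⊗ₜ x := by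
  induction u using TensorProduct.induction_on with
  | zero => simp
  | add u u' hu hu' => simp only [map_add, add_tmul, hu, hu']
  | tmul a b =>
    show TensorProduct.map (μH k H) (trivActL (D := k) k H)
        (tt k H H H k ((a ⊗ₜ b) ⊗ₜ (trivCoactL (D := k) k H x))) = _
    simp [TensorProduct.smul_tmul, TensorProduct.smul_tmul']

lemma triv_ydrL (u : H ⊗[k] H) (x : k) :
    ydrL k H (trivActR (D := k) k H) (trivCoactR (D := k) k H) (x ⊗ₜ u)
      = x ⊗ₜ (TensorProduct.rid k H (TensorProduct.map LinearMap.id (εH k H) u)) := by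
  induction u using TensorProduct.induction_on with
  | zero => simp
  | add u u' hu hu' => simp only [map_add, tmul_add, hu, hu']
  | tmul a b =>
    show TensorProduct.map LinearMap.id (μH k H ∘ₗ sw k H H)
        (asl k k H H ((trivCoactR (D := k) k H (trivActR (D := k) k H (x ⊗ₜ b))) ⊗ₜ a)) = _
    simp [TensorProduct.smul_tmul, TensorProduct.smul_tmul']

lemma triv_ydrR (u : H ⊗[k] H) (x : k) :
    ydrR k H (trivActR (D := k) k H) (trivCoactR (D := k) k H) (x ⊗ₜ u)
      = x ⊗ₜ (TensorProduct.lid k H (TensorProduct.map (εH k H) LinearMap.id u)) := by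
  induction u using TensorProduct.induction_on with
  | zero => simp
  | add u u' hu hu' => simp only [map_add, tmul_add, hu, hu']
  | tmul a b =>
    show TensorProduct.map (trivActR (D := k) k H) (μH k H)
        (tt k k H H H ((trivCoactR (D := k) k H x) ⊗ₜ (a ⊗ₜ b))) = _
    simp [TensorProduct.smul_tmul, TensorProduct.smul_tmul']

lemma unit_LRObj :
    IsLRObj k H (trivActL (D := k) k H) (trivActR (D := k) k H)
      (trivCoactL (D := k) k H) (trivCoactR (D := k) k H) := by
  refine ⟨⟨⟨?_, ?_⟩, ⟨?_, ?_⟩, ?_⟩, ⟨⟨?_, ?_⟩, ⟨?_, ?_⟩, ?_⟩, ?_, ?_, ?_, ?_⟩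
  · intro m; simp
  · intro h h' m; simp [epsH_mul, mul_smul]; ring
  · intro m; simp
  · intro m h h'; simp [epsH_mul]; ring
  · intro h m h'; simp; ring
  · intro m; simp
  · intro m; simp [deltaH_one]
  · intro m; simp
  · intro m; simp [deltaH_one]
  · intro m; simp
  · intro h m
    rw [triv_ydlL, triv_ydlR, deltaH_counit_left, deltaH_counit_right]
  · intro h m; simp [TensorProduct.smul_tmul']
  · intro h m
    rw [triv_ydrL, triv_ydrR, deltaH_counit_left, deltaH_counit_right]
  · intro m h; simp [TensorProduct.smul_tmul, TensorProduct.smul_tmul']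

-- morphisms
variable {M N M' N' : Type*}
  [AddCommGroup M] [Module k M] [AddCommGroup N] [Module k N]
  [AddCommGroup M'] [Module k M'] [AddCommGroup N'] [Module k N']
variable {aLM : H ⊗[k] M →ₗ[k] M} {aRM : M ⊗[k] H →ₗ[k] M}
  {cLM : M →ₗ[k] H ⊗[k] M} {cRM : M →ₗ[k] M ⊗[k] H}
  {aLN : H ⊗[k] N →ₗ[k] N} {aRN : N ⊗[k] H →ₗ[k] N}
  {cLN : N →ₗ[k] H ⊗[k] N} {cRN : N →ₗ[k] N ⊗[k] H}
  {aLM' : H ⊗[k] M' →ₗ[k] M'} {aRM' : M' ⊗[k] H →ₗ[k] M'}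
  {cLM' : M' →ₗ[k] H ⊗[k] M'} {cRM' : M' →ₗ[k] M' ⊗[k] H}
  {aLN' : H ⊗[k] N' →ₗ[k] N'} {aRN' : N' ⊗[k] H →ₗ[k] N'}
  {cLN' : N' →ₗ[k] H ⊗[k] N'} {cRN' : N' →ₗ[k] N' ⊗[k] H}

lemma tensor_hom (f : M →ₗ[k] M') (g : N →ₗ[k] N')
    (hf : IsLRHom k H aLM aRM cLM cRM aLM' aRM' cLM' cRM' f)
    (hg : IsLRHom k H aLN aRN cLN cRN aLN' aRN' cLN' cRN' g) :
    IsLRHom k H (tActL k H aLM aLN) (tActR k H aRM aRN)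
      (tCoactL k H cLM cLN) (tCoactR k H cRM cRN)
      (tActL k H aLM' aLN') (tActR k H aRM' aRN')
      (tCoactL k H cLM' cLN') (tCoactR k H cRM' cRN')
      (TensorProduct.map f g) := by
  refine ⟨?_, ?_, ?_, ?_⟩
  · intro h x
    rw [tActL_eq, tActL_eq]
    generalize δH k H h = u
    induction u using TensorProduct.induction_on with
    | zero => simp
    | add u u' hu hu' => simp only [map_add, add_tmul, hu, hu']
    | tmul a b =>
      induction x using TensorProduct.induction_on with
      | zero => simp
      | add x y hx hy => simp only [map_add, tmul_add, hx, hy]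
      | tmul m n => simp [hf.1, hg.1]
  · intro x h
    rw [tActR_eq, tActR_eq]
    generalize δH k H h = u
    induction u using TensorProduct.induction_on with
    | zero => simp
    | add u u' hu hu' => simp only [map_add, tmul_add, hu, hu']
    | tmul a b =>
      induction x using TensorProduct.induction_on with
      | zero => simp
      | add x y hx hy => simp only [map_add, add_tmul, hx, hy]
      | tmul m n => simp [hf.2.1, hg.2.1]
  · intro x
    induction x using TensorProduct.induction_on with
    | zero => simp
    | add x y hx hy => simp only [map_add, hx, hy]
    | tmul m n =>
      rw [TensorProduct.map_tmul, tCoactL_eq, tCoactL_eq, hf.2.2.1, hg.2.2.1]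
      generalize cLM m = p
      generalize cLN n = q
      induction p using TensorProduct.induction_on with
      | zero => simp
      | add p p' hp hp' => simp only [map_add, add_tmul, hp, hp']
      | tmul a m' =>
        induction q using TensorProduct.induction_on with
        | zero => simp
        | add q q' hq hq' => simp only [map_add, tmul_add, hq, hq']
        | tmul b n' => rfl
  · intro x
    induction x using TensorProduct.induction_on with
    | zero => simp
    | add x y hx hy => simp only [map_add, hx, hy]
    | tmul m n =>
      rw [TensorProduct.map_tmul, tCoactR_eq, tCoactR_eq, hf.2.2.2, hg.2.2.2]
      generalize cRM m = p
      generalize cRN n = q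
      induction p using TensorProduct.induction_on with
      | zero => simp
      | add p p' hp hp' => simp only [map_add, add_tmul, hp, hp']
      | tmul m' a =>
        induction q using TensorProduct.induction_on with
        | zero => simp
        | add q q' hq hq' => simp only [map_add, tmul_add, hq, hq']
        | tmul n' b => rfl
end

/-- LR(H) is monoidal: the tensor product of two objects of LR(H) is an
object of LR(H) (with diagonal actions and codiagonal coactions), the unit object `k`
(with trivial structures) is an object of LR(H), and the tensor product of two
morphisms of LR(H) is again a morphism of LR(H). -/
theorem lr_monoidal
    {k : Type*} [CommRing k] {H : Type*} [Ring H] [Bialgebra k H]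
    {M N M' N' : Type*}
    [AddCommGroup M] [Module k M] [AddCommGroup N] [Module k N]
    [AddCommGroup M'] [Module k M'] [AddCommGroup N'] [Module k N']
    (aLM : H ⊗[k] M →ₗ[k] M) (aRM : M ⊗[k] H →ₗ[k] M)
    (cLM : M →ₗ[k] H ⊗[k] M) (cRM : M →ₗ[k] M ⊗[k] H)
    (aLN : H ⊗[k] N →ₗ[k] N) (aRN : N ⊗[k] H →ₗ[k] N)
    (cLN : N →ₗ[k] H ⊗[k] N) (cRN : N →ₗ[k] N ⊗[k] H)
    (aLM' : H ⊗[k] M' →ₗ[k] M') (aRM' : M' ⊗[k] H →ₗ[k] M')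
    (cLM' : M' →ₗ[k] H ⊗[k] M') (cRM' : M' →ₗ[k] M' ⊗[k] H)
    (aLN' : H ⊗[k] N' →ₗ[k] N') (aRN' : N' ⊗[k] H →ₗ[k] N')
    (cLN' : N' →ₗ[k] H ⊗[k] N') (cRN' : N' →ₗ[k] N' ⊗[k] H)
    (hM : IsLRObj k H aLM aRM cLM cRM) (hN : IsLRObj k H aLN aRN cLN cRN)
    (hM' : IsLRObj k H aLM' aRM' cLM' cRM') (hN' : IsLRObj k H aLN' aRN' cLN' cRN')
    (f : M →ₗ[k] M') (g : N →ₗ[k] N')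
    (hf : IsLRHom k H aLM aRM cLM cRM aLM' aRM' cLM' cRM' f)
    (hg : IsLRHom k H aLN aRN cLN cRN aLN' aRN' cLN' cRN' g) :
    -- the tensor product of two objects is an object
    IsLRObj k H (tActL k H aLM aLN) (tActR k H aRM aRN)
      (tCoactL k H cLM cLN) (tCoactR k H cRM cRN) ∧
    -- the unit object k with trivial structures is an object
    IsLRObj k H (trivActL k H) (trivActR k H)
      (trivCoactL (D := k) k H) (trivCoactR (D := k) k H) ∧
    -- the tensor product of two morphisms is a morphism
    IsLRHom k H (tActL k H aLM aLN) (tActR k H aRM aRN)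
      (tCoactL k H cLM cLN) (tCoactR k H cRM cRN)
      (tActL k H aLM' aLN') (tActR k H aRM' aRN')
      (tCoactL k H cLM' cLN') (tCoactR k H cRM' cRN')
      (TensorProduct.map f g) := by
  exact ⟨⟨tensor_bimodule hM.1 hN.1, tensor_bicomodule hM.2.1 hN.2.1,
      tensor_YDl _ _ _ _ hM.2.2.1 hN.2.2.1, tensor_longLR hM.2.2.2.1 hN.2.2.2.1,
      tensor_YDr _ _ _ _ hM.2.2.2.2.1 hN.2.2.2.2.1, tensor_longRL hM.2.2.2.2.2 hN.2.2.2.2.2⟩,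
    unit_LRObj, tensor_hom f g hf hg⟩

end LRPaper
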